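/- arXiv:2509.06078 — 5 statements merged into one kernel-verified Lean document; each statement's English description precedes it below -/
import Mathlib

section
/- Suppose a, m, f solve the Fourier-side linearized system at frequency ξ. Then for every t ≥ 0: (d/dt)[ (1/2)(|a(t)|² + |m(t)|²) ] + μ |ξ|² |m(t)|² + (μ+λ) |ξ·m(t)|² + κ ε |ξ|² Re⟨ i a(t) ξ, m(t) ⟩ = Re⟨ f(t), m(t) ⟩. -/
open scoped BigOperators ComplexConjugate

/-- The ℂ-bilinear cross product of `e₃ = (0,0,1)` with `w ∈ ℂ³`: `e₃ × w = (−w₂, w₁, 0)`. -/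
def e3cross (w : Fin 3 → ℂ) : Fin 3 → ℂ := ![-(w 1), w 0, 0]

/-- The Fourier-side linearized rotating compressible Navier–Stokes–Korteweg system at
frequency `ξ`:  differentiable `a : [0,∞) → ℂ`, `m : [0,∞) → ℂ³` (with derivatives
`a'`, `m'`) and continuous forcing `f` satisfying, for all `t ≥ 0`,
`a' + (1/ε) i (ξ·m) = 0` and
`m' + μ|ξ|² m + (μ+λ)(ξ·m) ξ + Ω e₃ × m + (1/ε) i a ξ + κ ε |ξ|² i a ξ = f`. -/
structure FourierLinSys (μ lam κ ε Ω : ℝ) (ξ : Fin 3 → ℝ)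
    (a a' : ℝ → ℂ) (m m' : ℝ → Fin 3 → ℂ) (f : ℝ → Fin 3 → ℂ) : Prop where
  ha : ∀ t : ℝ, 0 ≤ t → HasDerivAt a (a' t) t
  hm : ∀ t : ℝ, 0 ≤ t → ∀ j : Fin 3, HasDerivAt (fun s => m s j) (m' t j) t
  hf : ∀ j : Fin 3, Continuous fun t => f t j
  eq_a : ∀ t : ℝ, 0 ≤ t →
    a' t + ((1 / ε : ℝ) : ℂ) * Complex.I * (∑ j : Fin 3, (ξ j : ℂ) * m t j) = 0
  eq_m : ∀ t : ℝ, 0 ≤ t → ∀ j : Fin 3,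
    m' t j + ((μ * ∑ k : Fin 3, (ξ k) ^ 2 : ℝ) : ℂ) * m t j
      + (((μ + lam) : ℝ) : ℂ) * (∑ k : Fin 3, (ξ k : ℂ) * m t k) * (ξ j : ℂ)
      + (Ω : ℂ) * e3cross (m t) j
      + ((1 / ε : ℝ) : ℂ) * Complex.I * a t * (ξ j : ℂ)
      + ((κ * ε * ∑ k : Fin 3, (ξ k) ^ 2 : ℝ) : ℂ) * Complex.I * a t * (ξ j : ℂ)
      = f t j

lemma hasDerivAt_abs_sq {g : ℝ → ℂ} {g' : ℂ} {t : ℝ} (h : HasDerivAt g g' t) :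
    HasDerivAt (fun s => ‖g s‖ ^ 2) (2 * (g' * conj (g t)).re) t := by
  have hre : HasDerivAt (fun s => (g s).re) g'.re t :=
    (Complex.reCLM.hasFDerivAt.comp_hasDerivAt t h)
  have him : HasDerivAt (fun s => (g s).im) g'.im t :=
    (Complex.imCLM.hasFDerivAt.comp_hasDerivAt t h)
  have h2 := (hre.pow 2).add (him.pow 2)
  convert h2 using 1
  · rfl
  · rfl
  · funext s; rw [Complex.sq_norm, Complex.normSq_apply, Pi.add_apply, Pi.pow_apply, Pi.pow_apply]; ring
  · simp [Complex.mul_re, Complex.conj_re, Complex.conj_im]; ring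

/-- energy identity for the Fourier-side linearized system.  For every
`t ≥ 0`,
`(d/dt)[(1/2)(|a|² + |m|²)] + μ|ξ|²|m|² + (μ+λ)|ξ·m|² + κ ε |ξ|² Re⟨ i a ξ, m ⟩
  = Re⟨ f, m ⟩`. -/
theorem energy_identity (μ lam κ ε Ω : ℝ) (hμ : 0 < μ) (hν : 2 * μ + lam = 1)
    (hκ : 0 < κ) (hε : 0 < ε) (ξ : Fin 3 → ℝ)
    (a a' : ℝ → ℂ) (m m' : ℝ → Fin 3 → ℂ) (f : ℝ → Fin 3 → ℂ)
    (hsys : FourierLinSys μ lam κ ε Ω ξ a a' m m' f) :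
    ∀ t : ℝ, 0 ≤ t →
      HasDerivAt
        (fun s => (1 / 2) * (‖a s‖ ^ 2 + ∑ j : Fin 3, ‖m s j‖ ^ 2))
        ((∑ j : Fin 3, f t j * conj (m t j)).re
          - μ * (∑ k : Fin 3, (ξ k) ^ 2) * (∑ j : Fin 3, ‖m t j‖ ^ 2)
          - (μ + lam) * ‖∑ k : Fin 3, (ξ k : ℂ) * m t k‖ ^ 2
          - κ * ε * (∑ k : Fin 3, (ξ k) ^ 2) *
              (∑ j : Fin 3, (Complex.I * a t * (ξ j : ℂ)) * conj (m t j)).re) t := by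
  intro t ht
  have hA := hasDerivAt_abs_sq (hsys.ha t ht)
  have hM0 := hasDerivAt_abs_sq (hsys.hm t ht 0)
  have hM1 := hasDerivAt_abs_sq (hsys.hm t ht 1)
  have hM2 := hasDerivAt_abs_sq (hsys.hm t ht 2)
  have hE := (hA.add ((hM0.add hM1).add hM2)).const_mul ((1:ℝ)/2)
  have ha' : a' t = -(((1 / ε : ℝ) : ℂ) * Complex.I * (∑ j : Fin 3, (ξ j : ℂ) * m t j)) := by
    linear_combination hsys.eq_a t ht
  have hm' : ∀ j : Fin 3, m' t j = f t j -
      (((μ * ∑ k : Fin 3, (ξ k) ^ 2 : ℝ) : ℂ) * m t j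
        + (((μ + lam) : ℝ) : ℂ) * (∑ k : Fin 3, (ξ k : ℂ) * m t k) * (ξ j : ℂ)
        + (Ω : ℂ) * e3cross (m t) j
        + ((1 / ε : ℝ) : ℂ) * Complex.I * a t * (ξ j : ℂ)
        + ((κ * ε * ∑ k : Fin 3, (ξ k) ^ 2 : ℝ) : ℂ) * Complex.I * a t * (ξ j : ℂ)) := by
    intro j; linear_combination hsys.eq_m t ht j
  convert hE using 1
  · rfl
  · rfl
  · funext s; simp [Fin.sum_univ_three]
  · rw [ha', hm' 0, hm' 1, hm' 2]
    simp only [Fin.sum_univ_three, e3cross, Matrix.cons_val_zero, Matrix.cons_val_one,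
      Matrix.head_cons, Matrix.cons_val_two, Matrix.tail_cons, Complex.sq_norm,
      Complex.normSq_apply, Complex.add_re, Complex.add_im, Complex.sub_re, Complex.sub_im,
      Complex.mul_re, Complex.mul_im, Complex.neg_re, Complex.neg_im, Complex.I_re,
      Complex.I_im, Complex.ofReal_re, Complex.ofReal_im, Complex.conj_re, Complex.conj_im,
      Complex.zero_re, Complex.zero_im]
    ring
end

section
/- Suppose a, m, f solve the Fourier-side linearized system at frequency ξ. Then for every t ≥ 0: (d/dt) Re⟨ i ε a(t) ξ, m(t) ⟩ + |ξ|² |a(t)|² + κ ε² |ξ|⁴ |a(t)|² ≤ |f(t)| ε |ξ| |a(t)| + |ξ|² |m(t)| ε |ξ| |a(t)| + |Ω| ε |ξ| |m(t)| |a(t)| + |ξ·m(t)|². -/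
open scoped BigOperators ComplexConjugate

private lemma cs3 (u v : Fin 3 → ℝ) (hu : ∀ j, 0 ≤ u j) (hv : ∀ j, 0 ≤ v j) :
    ∑ j : Fin 3, u j * v j ≤ Real.sqrt (∑ j : Fin 3, u j ^ 2) * Real.sqrt (∑ j : Fin 3, v j ^ 2) := by
  have h := Finset.sum_mul_sq_le_sq_mul_sq Finset.univ u v
  have h0 : 0 ≤ ∑ j : Fin 3, u j * v j :=
    Finset.sum_nonneg fun j _ => mul_nonneg (hu j) (hv j)
  calc ∑ j : Fin 3, u j * v j = Real.sqrt ((∑ j : Fin 3, u j * v j) ^ 2) := by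
        rw [Real.sqrt_sq h0]
    _ ≤ Real.sqrt ((∑ j : Fin 3, u j ^ 2) * ∑ j : Fin 3, v j ^ 2) := Real.sqrt_le_sqrt h
    _ = _ := Real.sqrt_mul (Finset.sum_nonneg fun j _ => sq_nonneg _) _

/-- cross-energy differential inequality for the Fourier-side linearized
system.  For every `t ≥ 0`, whenever `D` is the derivative at `t` of
`s ↦ Re⟨ i ε a(s) ξ, m(s) ⟩`, one has
`D + |ξ|²|a|² + κ ε² |ξ|⁴ |a|²
  ≤ |f| ε |ξ| |a| + |ξ|² |m| ε |ξ| |a| + |Ω| ε |ξ| |m| |a| + |ξ·m|²`. -/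
theorem cross_energy_inequality (μ lam κ ε Ω : ℝ) (hμ : 0 < μ) (hν : 2 * μ + lam = 1)
    (hκ : 0 < κ) (hε : 0 < ε) (ξ : Fin 3 → ℝ)
    (a a' : ℝ → ℂ) (m m' : ℝ → Fin 3 → ℂ) (f : ℝ → Fin 3 → ℂ)
    (hsys : FourierLinSys μ lam κ ε Ω ξ a a' m m' f) :
    ∀ t : ℝ, 0 ≤ t → ∀ D : ℝ,
      HasDerivAt
        (fun s => (∑ j : Fin 3, (Complex.I * (ε : ℂ) * a s * (ξ j : ℂ)) * conj (m s j)).re)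
        D t →
      D + (∑ k : Fin 3, (ξ k) ^ 2) * ‖a t‖ ^ 2
          + κ * ε ^ 2 * (∑ k : Fin 3, (ξ k) ^ 2) ^ 2 * ‖a t‖ ^ 2
        ≤ Real.sqrt (∑ j : Fin 3, ‖f t j‖ ^ 2) * ε *
              Real.sqrt (∑ k : Fin 3, (ξ k) ^ 2) * ‖a t‖
          + (∑ k : Fin 3, (ξ k) ^ 2) * Real.sqrt (∑ j : Fin 3, ‖m t j‖ ^ 2) *
              ε * Real.sqrt (∑ k : Fin 3, (ξ k) ^ 2) * ‖a t‖
          + |Ω| * ε * Real.sqrt (∑ k : Fin 3, (ξ k) ^ 2) *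
              Real.sqrt (∑ j : Fin 3, ‖m t j‖ ^ 2) * ‖a t‖
          + ‖∑ j : Fin 3, (ξ j : ℂ) * m t j‖ ^ 2 := by
  obtain ⟨ha, hm, hf, eqa, eqm⟩ := hsys
  intro t ht D hD
  -- the explicit derivative
  have hterm : ∀ j : Fin 3,
      HasDerivAt (fun s => (Complex.I * (ε : ℂ) * a s * (ξ j : ℂ)) * conj (m s j))
        (Complex.I * ε * a' t * ξ j * conj (m t j)
          + Complex.I * ε * a t * ξ j * conj (m' t j)) t := by
    intro j
    have h1 : HasDerivAt (fun s => Complex.I * (ε : ℂ) * a s * (ξ j : ℂ))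
        (Complex.I * ε * a' t * ξ j) t :=
      ((ha t ht).const_mul (Complex.I * (ε : ℂ))).mul_const ((ξ j : ℂ))
    have h2 : HasDerivAt (fun s => conj (m s j)) (conj (m' t j)) t := (hm t ht j).star
    exact h1.mul h2
  have hsum : HasDerivAt
      (fun s => ∑ j : Fin 3, (Complex.I * (ε : ℂ) * a s * (ξ j : ℂ)) * conj (m s j))
      (∑ j : Fin 3, (Complex.I * ε * a' t * ξ j * conj (m t j)
          + Complex.I * ε * a t * ξ j * conj (m' t j))) t :=
    HasDerivAt.fun_sum fun j _ => hterm j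
  have hre : HasDerivAt
      (fun s => (∑ j : Fin 3, (Complex.I * (ε : ℂ) * a s * (ξ j : ℂ)) * conj (m s j)).re)
      (∑ j : Fin 3, (Complex.I * ε * a' t * ξ j * conj (m t j)
          + Complex.I * ε * a t * ξ j * conj (m' t j))).re t :=
    Complex.reCLM.hasFDerivAt.comp_hasDerivAt t hsum
  have hDeq : D = (∑ j : Fin 3, (Complex.I * ε * a' t * ξ j * conj (m t j)
      + Complex.I * ε * a t * ξ j * conj (m' t j))).re := hD.unique hre
  -- solve the system for the derivatives
  have ea : a' t = -(((1 / ε : ℝ) : ℂ) * Complex.I * (∑ j : Fin 3, (ξ j : ℂ) * m t j)) := by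
    linear_combination eqa t ht
  have em : ∀ j : Fin 3, m' t j = f t j - ((μ * ∑ k : Fin 3, (ξ k) ^ 2 : ℝ) : ℂ) * m t j
      - (((μ + lam) : ℝ) : ℂ) * (∑ k : Fin 3, (ξ k : ℂ) * m t k) * (ξ j : ℂ)
      - (Ω : ℂ) * e3cross (m t) j
      - ((1 / ε : ℝ) : ℂ) * Complex.I * a t * (ξ j : ℂ)
      - ((κ * ε * ∑ k : Fin 3, (ξ k) ^ 2 : ℝ) : ℂ) * Complex.I * a t * (ξ j : ℂ) :=
    fun j => by linear_combination eqm t ht j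
  -- key algebraic identity
  have hlam : (lam : ℂ) = 1 - 2 * (μ : ℂ) := by
    have : lam = 1 - 2 * μ := by linarith
    rw [this]; push_cast; ring
  have hεc : (ε : ℂ) ≠ 0 := Complex.ofReal_ne_zero.mpr hε.ne'
  have key : (∑ j : Fin 3, (Complex.I * ε * a' t * ξ j * conj (m t j)
        + Complex.I * ε * a t * ξ j * conj (m' t j)))
      = (∑ j : Fin 3, (ξ j : ℂ) * m t j) * conj (∑ j : Fin 3, (ξ j : ℂ) * m t j)
        - ((∑ k : Fin 3, (ξ k) ^ 2 : ℝ) : ℂ) * (a t * conj (a t))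
        - (κ : ℂ) * (ε : ℂ) ^ 2 * ((∑ k : Fin 3, (ξ k) ^ 2 : ℝ) : ℂ) ^ 2 * (a t * conj (a t))
        + (∑ j : Fin 3, Complex.I * ε * a t * ξ j * conj (f t j))
        - Complex.I * ε * a t * ((∑ k : Fin 3, (ξ k) ^ 2 : ℝ) : ℂ)
            * conj (∑ j : Fin 3, (ξ j : ℂ) * m t j)
        - (∑ j : Fin 3, Complex.I * ε * a t * (Ω : ℂ) * ξ j * conj (e3cross (m t) j)) := by
    simp only [ea, em, e3cross, Fin.sum_univ_three, Matrix.cons_val_zero, Matrix.cons_val_one,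
      Matrix.head_cons, Matrix.cons_val_two, Matrix.tail_cons]
    push_cast
    simp only [map_add, map_sub, map_mul, map_neg, map_zero, map_one, Complex.conj_I,
      Complex.conj_ofReal, map_pow, map_ofNat, hlam, map_div₀]
    field_simp
    ring_nf
    simp only [Complex.I_sq, pow_succ, pow_zero, one_mul, Complex.I_sq]
    ring_nf
  -- real parts
  have hDre : D = ‖∑ j : Fin 3, (ξ j : ℂ) * m t j‖ ^ 2
      - (∑ k : Fin 3, (ξ k) ^ 2) * ‖a t‖ ^ 2
      - κ * ε ^ 2 * (∑ k : Fin 3, (ξ k) ^ 2) ^ 2 * ‖a t‖ ^ 2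
      + (∑ j : Fin 3, Complex.I * ε * a t * ξ j * conj (f t j)).re
      - (Complex.I * ε * a t * ((∑ k : Fin 3, (ξ k) ^ 2 : ℝ) : ℂ)
          * conj (∑ j : Fin 3, (ξ j : ℂ) * m t j)).re
      - (∑ j : Fin 3, Complex.I * ε * a t * (Ω : ℂ) * ξ j * conj (e3cross (m t) j)).re := by
    rw [hDeq, key]
    simp only [Complex.mul_conj, Complex.sub_re, Complex.add_re, ← Complex.sq_norm]
    norm_cast
  -- bounds
  have hAnn : (0:ℝ) ≤ ‖a t‖ := norm_nonneg _
  have hXnn : (0:ℝ) ≤ ∑ k : Fin 3, (ξ k) ^ 2 := Finset.sum_nonneg fun k _ => sq_nonneg _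
  have habs : ∀ g : Fin 3 → ℂ, ∀ j : Fin 3,
      ‖Complex.I * ε * a t * (ξ j : ℂ) * conj (g j)‖
        = ε * ‖a t‖ * (|ξ j| * ‖g j‖) := by
    intro g j
    rw [norm_mul, norm_mul, norm_mul, norm_mul, Complex.norm_I, Complex.norm_real,
      Complex.norm_real, Real.norm_eq_abs, Real.norm_eq_abs, Complex.norm_conj, abs_of_pos hε]
    ring
  have b1 : (∑ j : Fin 3, Complex.I * ε * a t * ξ j * conj (f t j)).re
      ≤ Real.sqrt (∑ j : Fin 3, ‖f t j‖ ^ 2) * ε *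
          Real.sqrt (∑ k : Fin 3, (ξ k) ^ 2) * ‖a t‖ := by
    calc (∑ j : Fin 3, Complex.I * ε * a t * ξ j * conj (f t j)).re
        ≤ ‖∑ j : Fin 3, Complex.I * ε * a t * ξ j * conj (f t j)‖ :=
          Complex.re_le_norm _
      _ ≤ ∑ j : Fin 3, ‖Complex.I * ε * a t * ξ j * conj (f t j)‖ :=
          norm_sum_le _ _
      _ = ε * ‖a t‖ * ∑ j : Fin 3, |ξ j| * ‖f t j‖ := by
          rw [Finset.mul_sum]; exact Finset.sum_congr rfl fun j _ => habs (f t) j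
      _ ≤ ε * ‖a t‖ * (Real.sqrt (∑ j : Fin 3, |ξ j| ^ 2) *
            Real.sqrt (∑ j : Fin 3, ‖f t j‖ ^ 2)) :=
          mul_le_mul_of_nonneg_left
            (cs3 _ _ (fun j => abs_nonneg _) (fun j => norm_nonneg _))
            (mul_nonneg hε.le hAnn)
      _ = _ := by simp only [sq_abs]; ring
  have hSle : ‖∑ j : Fin 3, (ξ j : ℂ) * m t j‖
      ≤ Real.sqrt (∑ k : Fin 3, (ξ k) ^ 2) *
          Real.sqrt (∑ j : Fin 3, ‖m t j‖ ^ 2) := by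
    calc ‖∑ j : Fin 3, (ξ j : ℂ) * m t j‖
        ≤ ∑ j : Fin 3, ‖(ξ j : ℂ) * m t j‖ := norm_sum_le _ _
      _ = ∑ j : Fin 3, |ξ j| * ‖m t j‖ :=
          Finset.sum_congr rfl fun j _ => by rw [norm_mul, Complex.norm_real, Real.norm_eq_abs]
      _ ≤ _ := by
          have := cs3 (fun j => |ξ j|) (fun j => ‖m t j‖)
            (fun j => abs_nonneg _) (fun j => norm_nonneg _)
          simpa [sq_abs] using this
  have b2 : -(Complex.I * ε * a t * ((∑ k : Fin 3, (ξ k) ^ 2 : ℝ) : ℂ)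
          * conj (∑ j : Fin 3, (ξ j : ℂ) * m t j)).re
      ≤ (∑ k : Fin 3, (ξ k) ^ 2) * Real.sqrt (∑ j : Fin 3, ‖m t j‖ ^ 2) *
          ε * Real.sqrt (∑ k : Fin 3, (ξ k) ^ 2) * ‖a t‖ := by
    calc -(Complex.I * ε * a t * ((∑ k : Fin 3, (ξ k) ^ 2 : ℝ) : ℂ)
          * conj (∑ j : Fin 3, (ξ j : ℂ) * m t j)).re
        ≤ ‖Complex.I * ε * a t * ((∑ k : Fin 3, (ξ k) ^ 2 : ℝ) : ℂ)
          * conj (∑ j : Fin 3, (ξ j : ℂ) * m t j)‖ :=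
          (neg_le_abs _).trans (Complex.abs_re_le_norm _)
      _ = ε * ‖a t‖ * (∑ k : Fin 3, (ξ k) ^ 2) *
            ‖∑ j : Fin 3, (ξ j : ℂ) * m t j‖ := by
          rw [norm_mul, norm_mul, norm_mul, norm_mul, Complex.norm_I, Complex.norm_real,
            Complex.norm_real, Real.norm_eq_abs, Real.norm_eq_abs, Complex.norm_conj, abs_of_pos hε, abs_of_nonneg hXnn]
          ring
      _ ≤ ε * ‖a t‖ * (∑ k : Fin 3, (ξ k) ^ 2) *
            (Real.sqrt (∑ k : Fin 3, (ξ k) ^ 2) *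
              Real.sqrt (∑ j : Fin 3, ‖m t j‖ ^ 2)) :=
          mul_le_mul_of_nonneg_left hSle
            (mul_nonneg (mul_nonneg hε.le hAnn) hXnn)
      _ = _ := by ring
  have hc : ∑ j : Fin 3, ‖e3cross (m t) j‖ ^ 2
      ≤ ∑ j : Fin 3, ‖m t j‖ ^ 2 := by
    simp only [Fin.sum_univ_three, e3cross, Matrix.cons_val_zero, Matrix.cons_val_one,
      Matrix.head_cons, Matrix.cons_val_two, Matrix.tail_cons, norm_neg,
      map_zero, norm_zero]
    nlinarith [sq_nonneg (‖m t 2‖)]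
  have b3 : -(∑ j : Fin 3, Complex.I * ε * a t * (Ω : ℂ) * ξ j * conj (e3cross (m t) j)).re
      ≤ |Ω| * ε * Real.sqrt (∑ k : Fin 3, (ξ k) ^ 2) *
          Real.sqrt (∑ j : Fin 3, ‖m t j‖ ^ 2) * ‖a t‖ := by
    have key3 : ∀ j : Fin 3,
        ‖Complex.I * ε * a t * (Ω : ℂ) * ξ j * conj (e3cross (m t) j)‖
          = ε * ‖a t‖ * |Ω| * (|ξ j| * ‖e3cross (m t) j‖) := by
      intro j
      rw [norm_mul, norm_mul, norm_mul, norm_mul, norm_mul, Complex.norm_I, Complex.norm_real,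
        Complex.norm_real, Complex.norm_real, Real.norm_eq_abs, Real.norm_eq_abs, Real.norm_eq_abs,
        Complex.norm_conj, abs_of_pos hε]
      ring
    calc -(∑ j : Fin 3, Complex.I * ε * a t * (Ω : ℂ) * ξ j * conj (e3cross (m t) j)).re
        ≤ ‖∑ j : Fin 3, Complex.I * ε * a t * (Ω : ℂ) * ξ j *
            conj (e3cross (m t) j)‖ := (neg_le_abs _).trans (Complex.abs_re_le_norm _)
      _ ≤ ∑ j : Fin 3, ‖Complex.I * ε * a t * (Ω : ℂ) * ξ j *
            conj (e3cross (m t) j)‖ := norm_sum_le _ _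
      _ = ε * ‖a t‖ * |Ω| *
            ∑ j : Fin 3, |ξ j| * ‖e3cross (m t) j‖ := by
          rw [Finset.mul_sum]; exact Finset.sum_congr rfl fun j _ => key3 j
      _ ≤ ε * ‖a t‖ * |Ω| *
            (Real.sqrt (∑ k : Fin 3, (ξ k) ^ 2) *
              Real.sqrt (∑ j : Fin 3, ‖m t j‖ ^ 2)) := by
          refine mul_le_mul_of_nonneg_left ?_
            (mul_nonneg (mul_nonneg hε.le hAnn) (abs_nonneg _))
          calc ∑ j : Fin 3, |ξ j| * ‖e3cross (m t) j‖
              ≤ Real.sqrt (∑ j : Fin 3, |ξ j| ^ 2) *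
                Real.sqrt (∑ j : Fin 3, ‖e3cross (m t) j‖ ^ 2) :=
                cs3 _ _ (fun j => abs_nonneg _) (fun j => norm_nonneg _)
            _ ≤ _ := by
                rw [show ∑ j : Fin 3, |ξ j| ^ 2 = ∑ k : Fin 3, (ξ k) ^ 2 from by
                  simp [sq_abs]]
                exact mul_le_mul_of_nonneg_left (Real.sqrt_le_sqrt hc) (Real.sqrt_nonneg _)
      _ = _ := by ring
  linarith [b1, b2, b3]
end

section
/- Suppose a, m, f solve the Fourier-side linearized system at frequency ξ, with Ω ≠ 0 or ξ ≠ 0. Set μ̲ = min{μ,1}, η = min{1/2, κ/2, κμ̲/2, μ̲/4, √κ}, Θ = |ξ|⁴/(Ω²ε² + |ξ|²), and define V(t) ≥ 0 by V(t)² = (Ω²ε² + |ξ|²)( |a(t)|² + |m(t)|² + κ ε² |ξ|² |a(t)|² ) + 2η |ξ|² Re⟨ i ε a(t) ξ, m(t) ⟩. Then for every t ≥ 0: (1/2)(d/dt)V(t)² + (η/3) Θ V(t)² ≤ 2 √(Ω²ε² + |ξ|²) |f(t)| V(t). -/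
open scoped BigOperators ComplexConjugate

set_option maxHeartbeats 4000000

private lemma young_aux (p q r : ℝ) (hp : 0 ≤ p) (hq : 0 ≤ q) (h : r^2 ≤ 4*(p*q)) :
    r ≤ p + q := by
  nlinarith [sq_nonneg (p - q), sq_nonneg (p + q - r)]


private lemma cs6 (a1 a2 a3 a4 a5 a6 b1 b2 b3 b4 b5 b6 : ℝ) :
    (a1*b1+a2*b2+a3*b3+a4*b4+a5*b5+a6*b6)^2
      ≤ (a1^2+a2^2+a3^2+a4^2+a5^2+a6^2)*(b1^2+b2^2+b3^2+b4^2+b5^2+b6^2) := by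
  linarith [sq_nonneg (a1*b2-a2*b1), sq_nonneg (a1*b3-a3*b1), sq_nonneg (a1*b4-a4*b1),
    sq_nonneg (a1*b5-a5*b1), sq_nonneg (a1*b6-a6*b1), sq_nonneg (a2*b3-a3*b2),
    sq_nonneg (a2*b4-a4*b2), sq_nonneg (a2*b5-a5*b2), sq_nonneg (a2*b6-a6*b2),
    sq_nonneg (a3*b4-a4*b3), sq_nonneg (a3*b5-a5*b3), sq_nonneg (a3*b6-a6*b3),
    sq_nonneg (a4*b5-a5*b4), sq_nonneg (a4*b6-a6*b4), sq_nonneg (a5*b6-a6*b5)]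

private lemma aux_ineq (μ lam κ ε Ω η μu S W D Vt p q u0 u1 u2 v0 v1 v2
    g0 g1 g2 h0 h1 h2 ξ0 ξ1 ξ2 : ℝ)
    (hμ : 0 < μ) (hν : 2*μ + lam = 1) (hκ : 0 < κ) (hε : 0 < ε)
    (hμu : μu = min μ 1)
    (hη : η = min (min (min (min (1/2) (κ/2)) (κ*μu/2)) (μu/4)) (Real.sqrt κ))
    (hS : S = ξ0^2 + ξ1^2 + ξ2^2) (hW : W = Ω^2*ε^2 + S) (hWpos : 0 < W)
    (hVt : 0 ≤ Vt)
    (hVsq : Vt^2 = W*((p^2+q^2) + (u0^2+v0^2+u1^2+v1^2+u2^2+v2^2)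
        + κ*ε^2*S*(p^2+q^2))
      + 2*η*S*ε*(ξ0*(p*v0-q*u0)+ξ1*(p*v1-q*u1)+ξ2*(p*v2-q*u2)))
    (hkey : (1/2)*D = -(W*μ*S*(u0^2+v0^2+u1^2+v1^2+u2^2+v2^2)
        + W*(μ+lam)*((ξ0*u0+ξ1*u1+ξ2*u2)^2+(ξ0*v0+ξ1*v1+ξ2*v2)^2)
        - η*S*((ξ0*u0+ξ1*u1+ξ2*u2)^2+(ξ0*v0+ξ1*v1+ξ2*v2)^2)
        + η*ε*S^2*(p*(ξ0*v0+ξ1*v1+ξ2*v2)-q*(ξ0*u0+ξ1*u1+ξ2*u2))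
        + η*ε*S*Ω*(p*(ξ1*v0-ξ0*v1)-q*(ξ1*u0-ξ0*u1))
        + η*S^2*(1+κ*ε^2*S)*(p^2+q^2))
      + (W*(g0*u0+g1*u1+g2*u2+h0*v0+h1*v1+h2*v2)
        + η*ε*S*(ξ0*(p*h0-q*g0)+ξ1*(p*h1-q*g1)+ξ2*(p*h2-q*g2)))) :
    (1/2)*D + (η/3)*(S^2/W)*Vt^2
      ≤ 2*Real.sqrt W*Real.sqrt (g0^2+h0^2+g1^2+h1^2+g2^2+h2^2)*Vt := by
  -- basic facts
  have hμu0 : 0 < μu := by rw [hμu]; exact lt_min hμ one_pos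
  have hμuμ : μu ≤ μ := by rw [hμu]; exact min_le_left _ _
  have hμu1 : μu ≤ 1 := by rw [hμu]; exact min_le_right _ _
  have hη12 : η ≤ 1/2 := by
    rw [hη]; exact ((((min_le_left _ _).trans (min_le_left _ _)).trans
      (min_le_left _ _)).trans (min_le_left _ _))
  have hηκ2 : η ≤ κ/2 := by
    rw [hη]; exact ((((min_le_left _ _).trans (min_le_left _ _)).trans
      (min_le_left _ _)).trans (min_le_right _ _))
  have hηκμ : η ≤ κ*μu/2 := by
    rw [hη]; exact (((min_le_left _ _).trans (min_le_left _ _)).trans (min_le_right _ _))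
  have hη14 : η ≤ μu/4 := by
    rw [hη]; exact ((min_le_left _ _).trans (min_le_right _ _))
  have hηsκ : η ≤ Real.sqrt κ := by rw [hη]; exact min_le_right _ _
  have hη0 : 0 < η := by
    rw [hη]
    refine lt_min (lt_min (lt_min (lt_min (by norm_num) (by linarith)) (by positivity))
      (by positivity)) (Real.sqrt_pos.mpr hκ)
  have hη2κ : η^2 ≤ κ := by
    have h := pow_le_pow_left₀ hη0.le hηsκ 2
    rwa [Real.sq_sqrt hκ.le] at h
  have hS0 : 0 ≤ S := by rw [hS]; positivity
  have hSW : S ≤ W := by nlinarith [sq_nonneg (Ω*ε)]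
  have hW0 : 0 ≤ W := hWpos.le
  have hε0 : 0 ≤ ε := hε.le
  -- atoms
  obtain ⟨A, hA⟩ : ∃ x : ℝ, x = p^2+q^2 := ⟨_, rfl⟩
  obtain ⟨M, hM⟩ : ∃ x : ℝ, x = u0^2+v0^2+u1^2+v1^2+u2^2+v2^2 := ⟨_, rfl⟩
  obtain ⟨R, hR⟩ : ∃ x : ℝ, x = ξ0*u0+ξ1*u1+ξ2*u2 := ⟨_, rfl⟩
  obtain ⟨Ii, hIi⟩ : ∃ x : ℝ, x = ξ0*v0+ξ1*v1+ξ2*v2 := ⟨_, rfl⟩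
  obtain ⟨K, hK⟩ : ∃ x : ℝ, x = R^2 + Ii^2 := ⟨_, rfl⟩
  obtain ⟨X, hX⟩ : ∃ x : ℝ, x = p*Ii - q*R := ⟨_, rfl⟩
  obtain ⟨Cre, hCre⟩ : ∃ x : ℝ, x = ξ1*u0-ξ0*u1 := ⟨_, rfl⟩
  obtain ⟨Cim, hCim⟩ : ∃ x : ℝ, x = ξ1*v0-ξ0*v1 := ⟨_, rfl⟩
  obtain ⟨Cr, hCr⟩ : ∃ x : ℝ, x = p*Cim - q*Cre := ⟨_, rfl⟩
  obtain ⟨Fn, hFn⟩ : ∃ x : ℝ, x = g0^2+h0^2+g1^2+h1^2+g2^2+h2^2 := ⟨_, rfl⟩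
  obtain ⟨FP, hFP⟩ : ∃ x : ℝ, x = W*(g0*u0+g1*u1+g2*u2+h0*v0+h1*v1+h2*v2)
      + η*ε*S*(ξ0*(p*h0-q*g0)+ξ1*(p*h1-q*g1)+ξ2*(p*h2-q*g2)) := ⟨_, rfl⟩
  obtain ⟨Diss, hDiss⟩ : ∃ x : ℝ, x = W*μ*S*M + W*(μ+lam)*K - η*S*K
      + η*ε*S^2*X + η*ε*S*Ω*Cr + η*S^2*(1+κ*ε^2*S)*A := ⟨_, rfl⟩
  have hkey' : (1/2)*D = -Diss + FP := by
    rw [hDiss, hFP, hA, hM, hK, hX, hCr, hCre, hCim, hR, hIi]; linear_combination hkey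
  have hVsq' : Vt^2 = W*(A + M + κ*ε^2*S*A) + 2*η*S*ε*X := by
    rw [hA, hM, hX, hR, hIi]; linear_combination hVsq
  clear hkey hVsq hη
  -- sign facts for atoms
  have hA0 : 0 ≤ A := by rw [hA]; positivity
  have hM0 : 0 ≤ M := by rw [hM]; positivity
  have hK0 : 0 ≤ K := by rw [hK]; positivity
  have hFn0 : 0 ≤ Fn := by rw [hFn]; positivity
  have hKM : K ≤ S*M := by
    rw [hK, hR, hIi, hS, hM]
    linarith [sq_nonneg (ξ0*u1-ξ1*u0), sq_nonneg (ξ0*u2-ξ2*u0), sq_nonneg (ξ1*u2-ξ2*u1),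
      sq_nonneg (ξ0*v1-ξ1*v0), sq_nonneg (ξ0*v2-ξ2*v0), sq_nonneg (ξ1*v2-ξ2*v1)]
  have hXK : X^2 ≤ A*K := by
    rw [hX, hA, hK]; linarith [sq_nonneg (p*R+q*Ii)]
  have hX2 : X^2 ≤ A*(S*M) := hXK.trans (mul_le_mul_of_nonneg_left hKM hA0)
  have hCC : Cre^2 + Cim^2 ≤ S*M := by
    rw [hCre, hCim, hS, hM]
    linarith [sq_nonneg (ξ0*u0+ξ1*u1), sq_nonneg (ξ0*v0+ξ1*v1),
      sq_nonneg (ξ0*u2), sq_nonneg (ξ1*u2), sq_nonneg (ξ2*u0), sq_nonneg (ξ2*u1),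
      sq_nonneg (ξ2*u2), sq_nonneg (ξ0*v2), sq_nonneg (ξ1*v2), sq_nonneg (ξ2*v0),
      sq_nonneg (ξ2*v1), sq_nonneg (ξ2*v2)]
  have hCr2 : Cr^2 ≤ A*(S*M) := by
    have h1 : Cr^2 ≤ A*(Cre^2+Cim^2) := by
      rw [hCr, hA]; linarith [sq_nonneg (p*Cre+q*Cim)]
    exact h1.trans (mul_le_mul_of_nonneg_left hCC hA0)
  have hεΩ : ε^2*Ω^2 ≤ W := by rw [hW]; linarith [hS0]
  have hSW2 : S^2 ≤ W^2 := pow_le_pow_left₀ hS0 hSW 2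
  have hSW3 : S^3 ≤ W^3 := pow_le_pow_left₀ hS0 hSW 3
  -- step 2 : (η/3)*(S^2/W)*Vt^2 ≤ Diss
  have hstep2 : (η/3)*(S^2/W)*Vt^2 ≤ Diss := by
    have hrw : (η/3)*(S^2/W)*Vt^2 = η*S^2*Vt^2/(3*W) := by
      field_simp
      try ring
    rw [hrw, div_le_iff₀ (by linarith : (0:ℝ) < 3*W), hVsq', hDiss]
    -- B1
    have hb : μu*(S*M) ≤ μ*(S*M) + (μ+lam)*K := by
      rcases le_total μ 1 with hc | hc
      · have hμueq : μu = μ := by rw [hμu, min_eq_left hc]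
        rw [hμueq]; linarith [mul_nonneg (by linarith : (0:ℝ) ≤ μ+lam) hK0]
      · have hμueq : μu = 1 := by rw [hμu, min_eq_right hc]
        have hml : μ + lam = 1 - μ := by linarith
        rw [hμueq, hml]
        linarith [mul_le_mul_of_nonneg_left hKM (by linarith : (0:ℝ) ≤ μ - 1)]
    have B1 : 3*W^2*(μu*(S*M)) ≤ 3*W^2*(μ*(S*M) + (μ+lam)*K) :=
      mul_le_mul_of_nonneg_left hb (by positivity)
    -- B2
    have hb2 : η*(S*K) ≤ μu/4*(W*(S*M)) := by
      calc η*(S*K) ≤ η*(S*(S*M)) :=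
            mul_le_mul_of_nonneg_left (mul_le_mul_of_nonneg_left hKM hS0) hη0.le
        _ ≤ η*(W*(S*M)) := by
            apply mul_le_mul_of_nonneg_left _ hη0.le
            exact mul_le_mul_of_nonneg_right hSW (mul_nonneg hS0 hM0)
        _ ≤ μu/4*(W*(S*M)) :=
            mul_le_mul_of_nonneg_right hη14 (mul_nonneg hW0 (mul_nonneg hS0 hM0))
    have B2 : 3*W*(η*(S*K)) ≤ 3*W*(μu/4*(W*(S*M))) :=
      mul_le_mul_of_nonneg_left hb2 (by linarith)
    -- B3
    have hf2 : η*S ≤ κ*μu/2*W := by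
      calc η*S ≤ (κ*μu/2)*S := mul_le_mul_of_nonneg_right hηκμ hS0
        _ ≤ κ*μu/2*W := mul_le_mul_of_nonneg_left hSW (by positivity)
    have B3 : 3*W*η*ε*S^2*(-X) ≤ (3*η/2)*(κ*ε^2*S^3*W*A) + (3*μu/4)*(W^2*(S*M)) := by
      apply young_aux _ _ _ (by positivity) (by positivity)
      have c1 : (0:ℝ) ≤ 9*W^2*η^2*ε^2*S^4 := by positivity
      have c2 : (0:ℝ) ≤ 9*W^2*η*ε^2*S^4*(A*M) := by positivity
      linarith [mul_le_mul_of_nonneg_left hX2 c1, mul_le_mul_of_nonneg_right hf2 c2]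
    -- B4
    have B4 : -(3*W*η*ε*S*Ω*Cr) ≤ (3*η/2)*(W*S^2*A) + (3*μu/8)*(W^2*(S*M)) := by
      apply young_aux _ _ _ (by positivity) (by positivity)
      have c1 : (0:ℝ) ≤ 9*η^2*S^2*W^2*(ε^2*Ω^2) := by positivity
      have c2 : (0:ℝ) ≤ 9*η^2*S^2*W^2*(A*(S*M)) := by positivity
      have c3 : (0:ℝ) ≤ 9*η*W^3*S^3*(A*M) := by positivity
      linarith [mul_le_mul_of_nonneg_left hCr2 c1, mul_le_mul_of_nonneg_right hεΩ c2,
        mul_le_mul_of_nonneg_right hη14 c3]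
    -- B5
    have hη3 : 8*η^3 ≤ μu*κ := by
      have h1 : η^2 ≤ (1/2:ℝ)^2 := pow_le_pow_left₀ hη0.le hη12 2
      have h2 : η^2*η ≤ (1/4)*(κ*μu/2) := by
        apply mul_le_mul (by linarith) hηκμ hη0.le (by norm_num)
      linarith [h2]
    have B5 : 2*(η^2*(S^3*(ε*X))) ≤ (η/2)*(κ*ε^2*S^3*W*A) + (μu/4)*(W^2*(S*M)) := by
      apply young_aux _ _ _ (by positivity) (by positivity)
      have c1 : (0:ℝ) ≤ 4*η^4*S^6*ε^2 := by positivity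
      have c2 : (0:ℝ) ≤ 4*η^4*ε^2*S^4*(A*M) := by positivity
      have c3 : (0:ℝ) ≤ 1/2*η*ε^2*S^4*W^3*(A*M) := by positivity
      linarith [mul_le_mul_of_nonneg_left hX2 c1, mul_le_mul_of_nonneg_right hSW3 c2,
        mul_le_mul_of_nonneg_right hη3 c3]
    -- B6
    have B6 : η*(W*(S^2*M)) ≤ μu/4*(W^2*(S*M)) := by
      calc η*(W*(S^2*M)) ≤ μu/4*(W*(S^2*M)) :=
            mul_le_mul_of_nonneg_right hη14 (by positivity)
        _ ≤ μu/4*(W^2*(S*M)) := by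
            apply mul_le_mul_of_nonneg_left _ (by positivity)
            linarith [mul_le_mul_of_nonneg_left hSW (mul_nonneg hW0 (mul_nonneg hS0 hM0))]
    have N1 : (0:ℝ) ≤ μu*(W^2*(S*M)) := by positivity
    have N2 : (0:ℝ) ≤ η*(W*(S^2*A)) := by positivity
    linarith [B1, B2, B3, B4, B5, B6, N1, N2]
  -- step 3 : FP ≤ sqrt W * sqrt Fn * Vt
  have hCS : FP^2 ≤ Fn * ((W*u0 - η*ε*S*q*ξ0)^2 + (W*v0 + η*ε*S*p*ξ0)^2
      + (W*u1 - η*ε*S*q*ξ1)^2 + (W*v1 + η*ε*S*p*ξ1)^2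
      + (W*u2 - η*ε*S*q*ξ2)^2 + (W*v2 + η*ε*S*p*ξ2)^2) := by
    calc FP^2 = (g0*(W*u0 - η*ε*S*q*ξ0)+h0*(W*v0 + η*ε*S*p*ξ0)
        +g1*(W*u1 - η*ε*S*q*ξ1)+h1*(W*v1 + η*ε*S*p*ξ1)
        +g2*(W*u2 - η*ε*S*q*ξ2)+h2*(W*v2 + η*ε*S*p*ξ2))^2 := by rw [hFP]; ring
      _ ≤ (g0^2+h0^2+g1^2+h1^2+g2^2+h2^2)*((W*u0 - η*ε*S*q*ξ0)^2 + (W*v0 + η*ε*S*p*ξ0)^2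
        + (W*u1 - η*ε*S*q*ξ1)^2 + (W*v1 + η*ε*S*p*ξ1)^2
        + (W*u2 - η*ε*S*q*ξ2)^2 + (W*v2 + η*ε*S*p*ξ2)^2) := cs6 _ _ _ _ _ _ _ _ _ _ _ _
      _ = Fn * _ := by rw [hFn]
  have hPPle : (W*u0 - η*ε*S*q*ξ0)^2 + (W*v0 + η*ε*S*p*ξ0)^2
      + (W*u1 - η*ε*S*q*ξ1)^2 + (W*v1 + η*ε*S*p*ξ1)^2
      + (W*u2 - η*ε*S*q*ξ2)^2 + (W*v2 + η*ε*S*p*ξ2)^2 ≤ W * Vt^2 := by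
    have hid : (W*u0 - η*ε*S*q*ξ0)^2 + (W*v0 + η*ε*S*p*ξ0)^2
        + (W*u1 - η*ε*S*q*ξ1)^2 + (W*v1 + η*ε*S*p*ξ1)^2
        + (W*u2 - η*ε*S*q*ξ2)^2 + (W*v2 + η*ε*S*p*ξ2)^2
        = W^2*M + η^2*ε^2*S^3*A + 2*W*η*ε*S*X := by
      rw [hM, hA, hX, hR, hIi, hS]; ring
    rw [hid, hVsq']
    have h1 : η^2*(ε^2*S^3*A) ≤ κ*(ε^2*S^3*A) :=
      mul_le_mul_of_nonneg_right hη2κ (by positivity)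
    have h2 : κ*ε^2*S*A*S^2 ≤ κ*ε^2*S*A*W^2 :=
      mul_le_mul_of_nonneg_left hSW2 (by positivity)
    linarith [mul_nonneg (mul_nonneg hW0 hW0) hA0]
  have hrhs0 : 0 ≤ Real.sqrt W * Real.sqrt Fn * Vt :=
    mul_nonneg (mul_nonneg (Real.sqrt_nonneg _) (Real.sqrt_nonneg _)) hVt
  have hFPle : FP ≤ Real.sqrt W * Real.sqrt Fn * Vt := by
    rcases le_or_gt FP 0 with hc | hc
    · linarith
    · have h1 : FP^2 ≤ Fn*(W*Vt^2) := hCS.trans (mul_le_mul_of_nonneg_left hPPle hFn0)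
      have h2 : FP ≤ Real.sqrt (Fn*(W*Vt^2)) := by
        have := (Real.le_sqrt hc.le (by positivity)).mpr h1
        exact this
      calc FP ≤ Real.sqrt (Fn*(W*Vt^2)) := h2
        _ = Real.sqrt W * Real.sqrt Fn * Vt := by
          rw [Real.sqrt_mul hFn0, Real.sqrt_mul hW0, Real.sqrt_sq hVt]; ring
  -- combine
  have hgoalFn : Real.sqrt (g0^2+h0^2+g1^2+h1^2+g2^2+h2^2) = Real.sqrt Fn := by rw [hFn]
  rw [hgoalFn]
  linarith [hstep2, hkey', hFPle, hrhs0]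


set_option maxHeartbeats 4000000 in
/-- differential inequality for the modified energy.  With
`μ̲ = min{μ,1}`, `η = min{1/2, κ/2, κμ̲/2, μ̲/4, √κ}`, `Θ = |ξ|⁴/(Ω²ε² + |ξ|²)` and
`V(t) ≥ 0` defined by
`V(t)² = (Ω²ε² + |ξ|²)(|a|² + |m|² + κ ε² |ξ|² |a|²) + 2η |ξ|² Re⟨ i ε a ξ, m ⟩`,
one has, for every `t ≥ 0`,
`(1/2)(d/dt)V² + (η/3) Θ V² ≤ 2 √(Ω²ε² + |ξ|²) |f(t)| V(t)`. -/
theorem modified_energy_inequality (μ lam κ ε Ω : ℝ) (hμ : 0 < μ) (hν : 2 * μ + lam = 1)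
    (hκ : 0 < κ) (hε : 0 < ε) (ξ : Fin 3 → ℝ) (hne : Ω ≠ 0 ∨ ξ ≠ 0)
    (a a' : ℝ → ℂ) (m m' : ℝ → Fin 3 → ℂ) (f : ℝ → Fin 3 → ℂ)
    (hsys : FourierLinSys μ lam κ ε Ω ξ a a' m m' f)
    (μu η Θ : ℝ)
    (hμu : μu = min μ 1)
    (hη : η = min (min (min (min (1 / 2) (κ / 2)) (κ * μu / 2)) (μu / 4)) (Real.sqrt κ))
    (hΘ : Θ = (∑ k : Fin 3, (ξ k) ^ 2) ^ 2 / (Ω ^ 2 * ε ^ 2 + ∑ k : Fin 3, (ξ k) ^ 2))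
    (V : ℝ → ℝ) (hV0 : ∀ t : ℝ, 0 ≤ t → 0 ≤ V t)
    (hVsq : ∀ t : ℝ, 0 ≤ t → V t ^ 2 =
      (Ω ^ 2 * ε ^ 2 + ∑ k : Fin 3, (ξ k) ^ 2) *
          (‖a t‖ ^ 2 + (∑ j : Fin 3, ‖m t j‖ ^ 2)
            + κ * ε ^ 2 * (∑ k : Fin 3, (ξ k) ^ 2) * ‖a t‖ ^ 2)
        + 2 * η * (∑ k : Fin 3, (ξ k) ^ 2) *
            (∑ j : Fin 3, (Complex.I * (ε : ℂ) * a t * (ξ j : ℂ)) * conj (m t j)).re) :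
    ∀ t : ℝ, 0 ≤ t → ∀ D : ℝ, HasDerivAt (fun s => V s ^ 2) D t →
      (1 / 2) * D + (η / 3) * Θ * V t ^ 2
        ≤ 2 * Real.sqrt (Ω ^ 2 * ε ^ 2 + ∑ k : Fin 3, (ξ k) ^ 2) *
            Real.sqrt (∑ j : Fin 3, ‖f t j‖ ^ 2) * V t := by
  obtain ⟨ha, hmd, hfc, eqa, eqm⟩ := hsys
  intro t ht D hD
  have hat := ha t ht
  have hWpos : 0 < Ω^2*ε^2+(ξ 0^2+ξ 1^2+ξ 2^2) := by
    rcases hne with hΩ | hξ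
    · have h1 : 0 < Ω^2*ε^2 := by positivity
      linarith [sq_nonneg (ξ 0), sq_nonneg (ξ 1), sq_nonneg (ξ 2)]
    · have h2 : ξ 0 ≠ 0 ∨ ξ 1 ≠ 0 ∨ ξ 2 ≠ 0 := by
        by_contra hc
        push_neg at hc
        exact hξ (by funext j; fin_cases j <;> simp [hc.1, hc.2.1, hc.2.2])
      have h3 : 0 < ξ 0^2+ξ 1^2+ξ 2^2 := by
        rcases h2 with h | h | h
        · have h4 : 0 < ξ 0^2 := by positivity
          linarith [sq_nonneg (ξ 1), sq_nonneg (ξ 2)]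
        · have h4 : 0 < ξ 1^2 := by positivity
          linarith [sq_nonneg (ξ 0), sq_nonneg (ξ 2)]
        · have h4 : 0 < ξ 2^2 := by positivity
          linarith [sq_nonneg (ξ 0), sq_nonneg (ξ 1)]
      linarith [sq_nonneg (Ω*ε)]
  have hsum : (∑ k : Fin 3, (ξ k)^2) = ξ 0^2+ξ 1^2+ξ 2^2 := by
    rw [Fin.sum_univ_three]
  have hfsum : (∑ j : Fin 3, ‖f t j‖^2) = (f t 0).re^2+(f t 0).im^2+(f t 1).re^2+(f t 1).im^2+(f t 2).re^2+(f t 2).im^2 := by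
    rw [Fin.sum_univ_three]
    simp only [Complex.sq_norm, Complex.normSq_apply]
    ring
  have hm0 := hmd t ht 0
  have hm1 := hmd t ht 1
  have hm2 := hmd t ht 2
  have hp : HasDerivAt (fun s => (a s).re) ((a' t).re) t :=
    Complex.reCLM.hasFDerivAt.comp_hasDerivAt t hat
  have hq : HasDerivAt (fun s => (a s).im) ((a' t).im) t :=
    Complex.imCLM.hasFDerivAt.comp_hasDerivAt t hat
  have hu0 : HasDerivAt (fun s => (m s 0).re) ((m' t 0).re) t :=
    Complex.reCLM.hasFDerivAt.comp_hasDerivAt t hm0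
  have hv0 : HasDerivAt (fun s => (m s 0).im) ((m' t 0).im) t :=
    Complex.imCLM.hasFDerivAt.comp_hasDerivAt t hm0
  have hu1 : HasDerivAt (fun s => (m s 1).re) ((m' t 1).re) t :=
    Complex.reCLM.hasFDerivAt.comp_hasDerivAt t hm1
  have hv1 : HasDerivAt (fun s => (m s 1).im) ((m' t 1).im) t :=
    Complex.imCLM.hasFDerivAt.comp_hasDerivAt t hm1
  have hu2 : HasDerivAt (fun s => (m s 2).re) ((m' t 2).re) t :=
    Complex.reCLM.hasFDerivAt.comp_hasDerivAt t hm2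
  have hv2 : HasDerivAt (fun s => (m s 2).im) ((m' t 2).im) t :=
    Complex.imCLM.hasFDerivAt.comp_hasDerivAt t hm2
  have dE : HasDerivAt (fun s : ℝ => (Ω^2*ε^2+(ξ 0^2+ξ 1^2+ξ 2^2))*(((a s).re^2+(a s).im^2) + ((m s 0).re^2+(m s 0).im^2+(m s 1).re^2+(m s 1).im^2+(m s 2).re^2+(m s 2).im^2) + κ*ε^2*(ξ 0^2+ξ 1^2+ξ 2^2)*((a s).re^2+(a s).im^2)) + 2*η*(ξ 0^2+ξ 1^2+ξ 2^2)*ε*(ξ 0*((a s).re*(m s 0).im-(a s).im*(m s 0).re)+ξ 1*((a s).re*(m s 1).im-(a s).im*(m s 1).re)+ξ 2*((a s).re*(m s 2).im-(a s).im*(m s 2).re)))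
      ((Ω^2*ε^2+(ξ 0^2+ξ 1^2+ξ 2^2))*((2*(a t).re*(a' t).re+2*(a t).im*(a' t).im) + (2*(m t 0).re*(m' t 0).re+2*(m t 0).im*(m' t 0).im+2*(m t 1).re*(m' t 1).re+2*(m t 1).im*(m' t 1).im+2*(m t 2).re*(m' t 2).re+2*(m t 2).im*(m' t 2).im) + κ*ε^2*(ξ 0^2+ξ 1^2+ξ 2^2)*(2*(a t).re*(a' t).re+2*(a t).im*(a' t).im)) + 2*η*(ξ 0^2+ξ 1^2+ξ 2^2)*ε*(ξ 0*((a' t).re*(m t 0).im+(a t).re*(m' t 0).im-((a' t).im*(m t 0).re+(a t).im*(m' t 0).re))+ξ 1*((a' t).re*(m t 1).im+(a t).re*(m' t 1).im-((a' t).im*(m t 1).re+(a t).im*(m' t 1).re))+ξ 2*((a' t).re*(m t 2).im+(a t).re*(m' t 2).im-((a' t).im*(m t 2).re+(a t).im*(m' t 2).re)))) t := by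
    have hA2 := (hp.pow 2).add (hq.pow 2)
    have hM2 := (((hu0.pow 2).add (hv0.pow 2)).add ((hu1.pow 2).add (hv1.pow 2))).add
      ((hu2.pow 2).add (hv2.pow 2))
    have hXa := (hp.mul hv0).sub (hq.mul hu0)
    have hXb := (hp.mul hv1).sub (hq.mul hu1)
    have hXc := (hp.mul hv2).sub (hq.mul hu2)
    have hh := (((hA2.add hM2).add (hA2.const_mul (κ*ε^2*(ξ 0^2+ξ 1^2+ξ 2^2)))).const_mul
        (Ω^2*ε^2+(ξ 0^2+ξ 1^2+ξ 2^2))).add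
      ((((hXa.const_mul (ξ 0)).add (hXb.const_mul (ξ 1))).add (hXc.const_mul (ξ 2))).const_mul
        (2*η*(ξ 0^2+ξ 1^2+ξ 2^2)*ε))
    convert hh using 1 <;> (try rfl) <;> (try funext s) <;> (try simp only [Pi.add_apply, Pi.sub_apply, Pi.mul_apply, Pi.pow_apply]) <;> push_cast <;> ring
  have hVE : ∀ s : ℝ, 0 ≤ s → V s ^ 2 = (Ω^2*ε^2+(ξ 0^2+ξ 1^2+ξ 2^2))*(((a s).re^2+(a s).im^2) + ((m s 0).re^2+(m s 0).im^2+(m s 1).re^2+(m s 1).im^2+(m s 2).re^2+(m s 2).im^2) + κ*ε^2*(ξ 0^2+ξ 1^2+ξ 2^2)*((a s).re^2+(a s).im^2)) + 2*η*(ξ 0^2+ξ 1^2+ξ 2^2)*ε*(ξ 0*((a s).re*(m s 0).im-(a s).im*(m s 0).re)+ξ 1*((a s).re*(m s 1).im-(a s).im*(m s 1).re)+ξ 2*((a s).re*(m s 2).im-(a s).im*(m s 2).re)) := by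
    intro s hs
    rw [hVsq s hs]
    simp only [Fin.sum_univ_three, Complex.sq_norm, Complex.normSq_apply, Complex.mul_re,
      Complex.mul_im, Complex.add_re, Complex.add_im, Complex.I_re, Complex.I_im,
      Complex.ofReal_re, Complex.ofReal_im, Complex.conj_re, Complex.conj_im]
    ring
  have hDD0 : D = (Ω^2*ε^2+(ξ 0^2+ξ 1^2+ξ 2^2))*((2*(a t).re*(a' t).re+2*(a t).im*(a' t).im) + (2*(m t 0).re*(m' t 0).re+2*(m t 0).im*(m' t 0).im+2*(m t 1).re*(m' t 1).re+2*(m t 1).im*(m' t 1).im+2*(m t 2).re*(m' t 2).re+2*(m t 2).im*(m' t 2).im) + κ*ε^2*(ξ 0^2+ξ 1^2+ξ 2^2)*(2*(a t).re*(a' t).re+2*(a t).im*(a' t).im)) + 2*η*(ξ 0^2+ξ 1^2+ξ 2^2)*ε*(ξ 0*((a' t).re*(m t 0).im+(a t).re*(m' t 0).im-((a' t).im*(m t 0).re+(a t).im*(m' t 0).re))+ξ 1*((a' t).re*(m t 1).im+(a t).re*(m' t 1).im-((a' t).im*(m t 1).re+(a t).im*(m' t 1).re))+ξ 2*((a' t).re*(m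 t 2).im+(a t).re*(m' t 2).im-((a' t).im*(m t 2).re+(a t).im*(m' t 2).re))) :=
    UniqueDiffWithinAt.eq_deriv _ (uniqueDiffOn_Ici 0 t ht)
      ((hD.hasDerivWithinAt).congr (fun y hy => (hVE y hy).symm) ((hVE t ht).symm))
      dE.hasDerivWithinAt
  have hA' : a' t = -(((1/ε : ℝ) : ℂ) * Complex.I *
      ((ξ 0 : ℂ)*m t 0 + (ξ 1 : ℂ)*m t 1 + (ξ 2 : ℂ)*m t 2)) := by
    have h := eqa t ht
    simp only [Fin.sum_univ_three] at h
    linear_combination h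
  have hM'0 : m' t 0 = f t 0 - ((μ*(ξ 0^2+ξ 1^2+ξ 2^2) : ℝ) : ℂ)*m t 0
      - ((μ+lam : ℝ) : ℂ)*((ξ 0 : ℂ)*m t 0+(ξ 1 : ℂ)*m t 1+(ξ 2 : ℂ)*m t 2)*(ξ 0 : ℂ)
      - (Ω : ℂ)*(-(m t 1)) - ((1/ε : ℝ) : ℂ)*Complex.I*a t*(ξ 0 : ℂ)
      - ((κ*ε*(ξ 0^2+ξ 1^2+ξ 2^2) : ℝ) : ℂ)*Complex.I*a t*(ξ 0 : ℂ) := by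
    have h := eqm t ht 0
    simp only [Fin.sum_univ_three] at h
    have he : e3cross (m t) 0 = -(m t 1) := rfl
    rw [he] at h
    linear_combination h
  have hM'1 : m' t 1 = f t 1 - ((μ*(ξ 0^2+ξ 1^2+ξ 2^2) : ℝ) : ℂ)*m t 1
      - ((μ+lam : ℝ) : ℂ)*((ξ 0 : ℂ)*m t 0+(ξ 1 : ℂ)*m t 1+(ξ 2 : ℂ)*m t 2)*(ξ 1 : ℂ)
      - (Ω : ℂ)*(m t 0) - ((1/ε : ℝ) : ℂ)*Complex.I*a t*(ξ 1 : ℂ)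
      - ((κ*ε*(ξ 0^2+ξ 1^2+ξ 2^2) : ℝ) : ℂ)*Complex.I*a t*(ξ 1 : ℂ) := by
    have h := eqm t ht 1
    simp only [Fin.sum_univ_three] at h
    have he : e3cross (m t) 1 = m t 0 := rfl
    rw [he] at h
    linear_combination h
  have hM'2 : m' t 2 = f t 2 - ((μ*(ξ 0^2+ξ 1^2+ξ 2^2) : ℝ) : ℂ)*m t 2
      - ((μ+lam : ℝ) : ℂ)*((ξ 0 : ℂ)*m t 0+(ξ 1 : ℂ)*m t 1+(ξ 2 : ℂ)*m t 2)*(ξ 2 : ℂ)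
      - ((1/ε : ℝ) : ℂ)*Complex.I*a t*(ξ 2 : ℂ)
      - ((κ*ε*(ξ 0^2+ξ 1^2+ξ 2^2) : ℝ) : ℂ)*Complex.I*a t*(ξ 2 : ℂ) := by
    have h := eqm t ht 2
    simp only [Fin.sum_univ_three] at h
    have he : e3cross (m t) 2 = 0 := rfl
    rw [he] at h
    linear_combination h
  have hp' : ε*(a' t).re = ξ 0*(m t 0).im+ξ 1*(m t 1).im+ξ 2*(m t 2).im := by
    rw [hA']
    simp only [Complex.mul_re, Complex.mul_im, Complex.add_re, Complex.add_im,
      Complex.sub_re, Complex.sub_im, Complex.neg_re, Complex.neg_im, Complex.I_re,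
      Complex.I_im, Complex.ofReal_re, Complex.ofReal_im, Complex.zero_re, Complex.zero_im]
    field_simp
    try ring
  have hq' : ε*(a' t).im = -(ξ 0*(m t 0).re+ξ 1*(m t 1).re+ξ 2*(m t 2).re) := by
    rw [hA']
    simp only [Complex.mul_re, Complex.mul_im, Complex.add_re, Complex.add_im,
      Complex.sub_re, Complex.sub_im, Complex.neg_re, Complex.neg_im, Complex.I_re,
      Complex.I_im, Complex.ofReal_re, Complex.ofReal_im, Complex.zero_re, Complex.zero_im]
    field_simp
    try ring
  have hu0' : ε*(m' t 0).re = ε*(f t 0).re - ε*(μ*(ξ 0^2+ξ 1^2+ξ 2^2))*(m t 0).re - ε*(μ+lam)*(ξ 0*(m t 0).re+ξ 1*(m t 1).re+ξ 2*(m t 2).re)*ξ 0 - ε*Ω*(-(m t 1).re) + (a t).im*ξ 0 + κ*ε^2*(ξ 0^2+ξ 1^2+ξ 2^2)*(a t).im*ξ 0 := by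
    rw [hM'0]
    simp only [Complex.mul_re, Complex.mul_im, Complex.add_re, Complex.add_im,
      Complex.sub_re, Complex.sub_im, Complex.neg_re, Complex.neg_im, Complex.I_re,
      Complex.I_im, Complex.ofReal_re, Complex.ofReal_im, Complex.zero_re, Complex.zero_im]
    field_simp
    try ring
  have hv0' : ε*(m' t 0).im = ε*(f t 0).im - ε*(μ*(ξ 0^2+ξ 1^2+ξ 2^2))*(m t 0).im - ε*(μ+lam)*(ξ 0*(m t 0).im+ξ 1*(m t 1).im+ξ 2*(m t 2).im)*ξ 0 - ε*Ω*(-(m t 1).im) - (a t).re*ξ 0 - κ*ε^2*(ξ 0^2+ξ 1^2+ξ 2^2)*(a t).re*ξ 0 := by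
    rw [hM'0]
    simp only [Complex.mul_re, Complex.mul_im, Complex.add_re, Complex.add_im,
      Complex.sub_re, Complex.sub_im, Complex.neg_re, Complex.neg_im, Complex.I_re,
      Complex.I_im, Complex.ofReal_re, Complex.ofReal_im, Complex.zero_re, Complex.zero_im]
    field_simp
    try ring
  have hu1' : ε*(m' t 1).re = ε*(f t 1).re - ε*(μ*(ξ 0^2+ξ 1^2+ξ 2^2))*(m t 1).re - ε*(μ+lam)*(ξ 0*(m t 0).re+ξ 1*(m t 1).re+ξ 2*(m t 2).re)*ξ 1 - ε*Ω*((m t 0).re) + (a t).im*ξ 1 + κ*ε^2*(ξ 0^2+ξ 1^2+ξ 2^2)*(a t).im*ξ 1 := by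
    rw [hM'1]
    simp only [Complex.mul_re, Complex.mul_im, Complex.add_re, Complex.add_im,
      Complex.sub_re, Complex.sub_im, Complex.neg_re, Complex.neg_im, Complex.I_re,
      Complex.I_im, Complex.ofReal_re, Complex.ofReal_im, Complex.zero_re, Complex.zero_im]
    field_simp
    try ring
  have hv1' : ε*(m' t 1).im = ε*(f t 1).im - ε*(μ*(ξ 0^2+ξ 1^2+ξ 2^2))*(m t 1).im - ε*(μ+lam)*(ξ 0*(m t 0).im+ξ 1*(m t 1).im+ξ 2*(m t 2).im)*ξ 1 - ε*Ω*((m t 0).im) - (a t).re*ξ 1 - κ*ε^2*(ξ 0^2+ξ 1^2+ξ 2^2)*(a t).re*ξ 1 := by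
    rw [hM'1]
    simp only [Complex.mul_re, Complex.mul_im, Complex.add_re, Complex.add_im,
      Complex.sub_re, Complex.sub_im, Complex.neg_re, Complex.neg_im, Complex.I_re,
      Complex.I_im, Complex.ofReal_re, Complex.ofReal_im, Complex.zero_re, Complex.zero_im]
    field_simp
    try ring
  have hu2' : ε*(m' t 2).re = ε*(f t 2).re - ε*(μ*(ξ 0^2+ξ 1^2+ξ 2^2))*(m t 2).re - ε*(μ+lam)*(ξ 0*(m t 0).re+ξ 1*(m t 1).re+ξ 2*(m t 2).re)*ξ 2 + (a t).im*ξ 2 + κ*ε^2*(ξ 0^2+ξ 1^2+ξ 2^2)*(a t).im*ξ 2 := by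
    rw [hM'2]
    simp only [Complex.mul_re, Complex.mul_im, Complex.add_re, Complex.add_im,
      Complex.sub_re, Complex.sub_im, Complex.neg_re, Complex.neg_im, Complex.I_re,
      Complex.I_im, Complex.ofReal_re, Complex.ofReal_im, Complex.zero_re, Complex.zero_im]
    field_simp
    try ring
  have hv2' : ε*(m' t 2).im = ε*(f t 2).im - ε*(μ*(ξ 0^2+ξ 1^2+ξ 2^2))*(m t 2).im - ε*(μ+lam)*(ξ 0*(m t 0).im+ξ 1*(m t 1).im+ξ 2*(m t 2).im)*ξ 2 - (a t).re*ξ 2 - κ*ε^2*(ξ 0^2+ξ 1^2+ξ 2^2)*(a t).re*ξ 2 := by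
    rw [hM'2]
    simp only [Complex.mul_re, Complex.mul_im, Complex.add_re, Complex.add_im,
      Complex.sub_re, Complex.sub_im, Complex.neg_re, Complex.neg_im, Complex.I_re,
      Complex.I_im, Complex.ofReal_re, Complex.ofReal_im, Complex.zero_re, Complex.zero_im]
    field_simp
    try ring
  have keyε : ε*((1/2)*D) = ε*(-((Ω^2*ε^2+(ξ 0^2+ξ 1^2+ξ 2^2))*μ*(ξ 0^2+ξ 1^2+ξ 2^2)*((m t 0).re^2+(m t 0).im^2+(m t 1).re^2+(m t 1).im^2+(m t 2).re^2+(m t 2).im^2) + (Ω^2*ε^2+(ξ 0^2+ξ 1^2+ξ 2^2))*(μ+lam)*((ξ 0*(m t 0).re+ξ 1*(m t 1).re+ξ 2*(m t 2).re)^2+(ξ 0*(m t 0).im+ξ 1*(m t 1).im+ξ 2*(m t 2).im)^2) - η*(ξ 0^2+ξ 1^2+ξ 2^2)*((ξ 0*(m t 0).re+ξ 1*(m t 1).re+ξ 2*(m t 2).re)^2+(ξ 0*(m t 0).im+ξ 1*(m t 1).im+ξ 2*(m t 2).im)^2) + η*ε*(ξ 0^2+ξ 1^2+ξ 2^2)^2*((a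 t).re*(ξ 0*(m t 0).im+ξ 1*(m t 1).im+ξ 2*(m t 2).im)-(a t).im*(ξ 0*(m t 0).re+ξ 1*(m t 1).re+ξ 2*(m t 2).re)) + η*ε*(ξ 0^2+ξ 1^2+ξ 2^2)*Ω*((a t).re*(ξ 1*(m t 0).im-ξ 0*(m t 1).im)-(a t).im*(ξ 1*(m t 0).re-ξ 0*(m t 1).re)) + η*(ξ 0^2+ξ 1^2+ξ 2^2)^2*(1+κ*ε^2*(ξ 0^2+ξ 1^2+ξ 2^2))*((a t).re^2+(a t).im^2)) + ((Ω^2*ε^2+(ξ 0^2+ξ 1^2+ξ 2^2))*((f t 0).re*(m t 0).re+(f t 1).re*(m t 1).re+(f t 2).re*(m t 2).re+(f t 0).im*(m t 0).im+(f t 1).im*(m t 1).im+(f t 2).im*(m t 2).im) + η*ε*(ξ 0^2+ξ 1^2+ξ 2^2)*(ξ 0*((a t).re*(f t 0).im-(a t).im*(f t 0).re)+ξ 1*((a t).re*(f t 1).im-(a t).im*(f t 1).re)+ξ 2*((a t).re*(f t 2).im-(a t).im*(f t 2).re)))) := by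
    rw [hDD0]
    linear_combination ((Ω^2*ε^2+(ξ 0^2+ξ 1^2+ξ 2^2))*(1+κ*ε^2*(ξ 0^2+ξ 1^2+ξ 2^2))*(a t).re + η*(ξ 0^2+ξ 1^2+ξ 2^2)*ε*(ξ 0*(m t 0).im+ξ 1*(m t 1).im+ξ 2*(m t 2).im)) * hp'
      + ((Ω^2*ε^2+(ξ 0^2+ξ 1^2+ξ 2^2))*(1+κ*ε^2*(ξ 0^2+ξ 1^2+ξ 2^2))*(a t).im - η*(ξ 0^2+ξ 1^2+ξ 2^2)*ε*(ξ 0*(m t 0).re+ξ 1*(m t 1).re+ξ 2*(m t 2).re)) * hq'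
      + ((Ω^2*ε^2+(ξ 0^2+ξ 1^2+ξ 2^2))*(m t 0).re - η*(ξ 0^2+ξ 1^2+ξ 2^2)*ε*(a t).im*ξ 0) * hu0'
      + ((Ω^2*ε^2+(ξ 0^2+ξ 1^2+ξ 2^2))*(m t 0).im + η*(ξ 0^2+ξ 1^2+ξ 2^2)*ε*(a t).re*ξ 0) * hv0'
      + ((Ω^2*ε^2+(ξ 0^2+ξ 1^2+ξ 2^2))*(m t 1).re - η*(ξ 0^2+ξ 1^2+ξ 2^2)*ε*(a t).im*ξ 1) * hu1'
      + ((Ω^2*ε^2+(ξ 0^2+ξ 1^2+ξ 2^2))*(m t 1).im + η*(ξ 0^2+ξ 1^2+ξ 2^2)*ε*(a t).re*ξ 1) * hv1'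
      + ((Ω^2*ε^2+(ξ 0^2+ξ 1^2+ξ 2^2))*(m t 2).re - η*(ξ 0^2+ξ 1^2+ξ 2^2)*ε*(a t).im*ξ 2) * hu2'
      + ((Ω^2*ε^2+(ξ 0^2+ξ 1^2+ξ 2^2))*(m t 2).im + η*(ξ 0^2+ξ 1^2+ξ 2^2)*ε*(a t).re*ξ 2) * hv2'
      + (-(η*ε^2*(ξ 0^2+ξ 1^2+ξ 2^2)^2*((a t).re*(ξ 0*(m t 0).im+ξ 1*(m t 1).im+ξ 2*(m t 2).im)-(a t).im*(ξ 0*(m t 0).re+ξ 1*(m t 1).re+ξ 2*(m t 2).re)))) * hν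
  have key : (1/2)*D = -((Ω^2*ε^2+(ξ 0^2+ξ 1^2+ξ 2^2))*μ*(ξ 0^2+ξ 1^2+ξ 2^2)*((m t 0).re^2+(m t 0).im^2+(m t 1).re^2+(m t 1).im^2+(m t 2).re^2+(m t 2).im^2) + (Ω^2*ε^2+(ξ 0^2+ξ 1^2+ξ 2^2))*(μ+lam)*((ξ 0*(m t 0).re+ξ 1*(m t 1).re+ξ 2*(m t 2).re)^2+(ξ 0*(m t 0).im+ξ 1*(m t 1).im+ξ 2*(m t 2).im)^2) - η*(ξ 0^2+ξ 1^2+ξ 2^2)*((ξ 0*(m t 0).re+ξ 1*(m t 1).re+ξ 2*(m t 2).re)^2+(ξ 0*(m t 0).im+ξ 1*(m t 1).im+ξ 2*(m t 2).im)^2) + η*ε*(ξ 0^2+ξ 1^2+ξ 2^2)^2*((a t).re*(ξ 0*(m t 0).im+ξ 1*(m t 1).im+ξ 2*(m t 2).im)-(a t).im*(ξ 0*(m t 0).re+ξ 1*(m t 1).re+ξ 2*(m t 2).re)) + η*ε*(ξ 0^2+ξ 1^2+ξ 2^2)*Ω*((a t).re*(ξ 1*(m t 0).im-ξ 0*(m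 t 1).im)-(a t).im*(ξ 1*(m t 0).re-ξ 0*(m t 1).re)) + η*(ξ 0^2+ξ 1^2+ξ 2^2)^2*(1+κ*ε^2*(ξ 0^2+ξ 1^2+ξ 2^2))*((a t).re^2+(a t).im^2)) + ((Ω^2*ε^2+(ξ 0^2+ξ 1^2+ξ 2^2))*((f t 0).re*(m t 0).re+(f t 1).re*(m t 1).re+(f t 2).re*(m t 2).re+(f t 0).im*(m t 0).im+(f t 1).im*(m t 1).im+(f t 2).im*(m t 2).im) + η*ε*(ξ 0^2+ξ 1^2+ξ 2^2)*(ξ 0*((a t).re*(f t 0).im-(a t).im*(f t 0).re)+ξ 1*((a t).re*(f t 1).im-(a t).im*(f t 1).re)+ξ 2*((a t).re*(f t 2).im-(a t).im*(f t 2).re))) :=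
    mul_left_cancel₀ hε.ne' keyε
  rw [hΘ, hsum, hfsum]
  exact aux_ineq μ lam κ ε Ω η μu (ξ 0^2+ξ 1^2+ξ 2^2) (Ω^2*ε^2+(ξ 0^2+ξ 1^2+ξ 2^2)) D (V t)
    (a t).re (a t).im (m t 0).re (m t 1).re (m t 2).re (m t 0).im (m t 1).im (m t 2).im
    (f t 0).re (f t 1).re (f t 2).re (f t 0).im (f t 1).im (f t 2).im (ξ 0) (ξ 1) (ξ 2)
    hμ hν hκ hε hμu hη rfl rfl hWpos (hV0 t ht) (hVE t ht) key
end

section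
/- Let T > 0, c ≥ 0, let g : [0,T] → [0,∞) be continuous, and let V : [0,T] → [0,∞) be continuous with V² differentiable on [0,T] and satisfying (1/2)(d/dt)V(t)² + c V(t)² ≤ g(t) V(t) for all t ∈ [0,T]. Then for every t ∈ [0,T]: V(t) ≤ e^{−ct} V(0) + ∫₀ᵗ e^{−c(t−τ)} g(τ) dτ. -/
/-- Grönwall-type step.  Let `T > 0`, `c ≥ 0`, let `g : [0,T] → [0,∞)` be
continuous and let `V : [0,T] → [0,∞)` be continuous with `V²` differentiable on `[0,T]`
(with derivative `W`) satisfying `(1/2)(d/dt)V² + c V² ≤ g V` on `[0,T]`.  Then for every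
`t ∈ [0,T]`: `V(t) ≤ e^{−ct} V(0) + ∫₀ᵗ e^{−c(t−τ)} g(τ) dτ`. -/
theorem gronwall_sqrt_step (T c : ℝ) (hT : 0 < T) (hc : 0 ≤ c) (g V W : ℝ → ℝ)
    (hg : ContinuousOn g (Set.Icc 0 T)) (hg0 : ∀ t ∈ Set.Icc (0:ℝ) T, 0 ≤ g t)
    (hV : ContinuousOn V (Set.Icc 0 T)) (hV0 : ∀ t ∈ Set.Icc (0:ℝ) T, 0 ≤ V t)
    (hW : ∀ t ∈ Set.Icc (0:ℝ) T,
      HasDerivWithinAt (fun s => V s ^ 2) (W t) (Set.Icc 0 T) t)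
    (hineq : ∀ t ∈ Set.Icc (0:ℝ) T, (1 / 2) * W t + c * V t ^ 2 ≤ g t * V t) :
    ∀ t ∈ Set.Icc (0:ℝ) T,
      V t ≤ Real.exp (-c * t) * V 0 + ∫ τ in (0:ℝ)..t, Real.exp (-c * (t - τ)) * g τ := by
  intro t ht
  obtain ⟨ht0, htT⟩ := ht
  have hIcc : Set.Icc (0:ℝ) t ⊆ Set.Icc 0 T := Set.Icc_subset_Icc le_rfl htT
  set A : ℝ := ∫ τ in (0:ℝ)..t, Real.exp (c*τ) * g τ with hA
  set B : ℝ := ∫ τ in (0:ℝ)..t, Real.exp (c*τ) with hB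
  -- integrability facts
  have hgc : ContinuousOn (fun τ => Real.exp (c*τ) * g τ) (Set.Icc 0 t) :=
    (Real.continuous_exp.comp (continuous_const.mul continuous_id)).continuousOn.mul
      (hg.mono hIcc)
  have key : ∀ δ : ℝ, 0 < δ →
      Real.exp (c*t) * Real.sqrt (V t ^ 2 + δ)
        ≤ Real.sqrt (V 0 ^ 2 + δ) + A + c * Real.sqrt δ * B := by
    intro δ hδ
    set h : ℝ → ℝ := fun s => Real.exp (c*s) * Real.sqrt (V s ^ 2 + δ) with hh
    set φ : ℝ → ℝ := fun τ => Real.exp (c*τ) * g τ + (c * Real.sqrt δ) * Real.exp (c*τ)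
      with hφ
    have hpos : ∀ s, (0:ℝ) < V s ^ 2 + δ := fun s => by positivity
    have hcont : ContinuousOn h (Set.Icc 0 t) := by
      apply ((Real.continuous_exp.comp (continuous_const.mul continuous_id)).continuousOn).mul
      exact Real.continuous_sqrt.comp_continuousOn
        ((((hV.mono hIcc).pow 2).add continuousOn_const))
    have hφcont : ContinuousOn φ (Set.Icc 0 t) := by
      apply hgc.add
      exact (continuous_const.mul
        (Real.continuous_exp.comp (continuous_const.mul continuous_id))).continuousOn
    have hφint : MeasureTheory.IntegrableOn φ (Set.Icc 0 t) := hφcont.integrableOn_Icc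
    have hderiv : ∀ x ∈ Set.Ioo (0:ℝ) t, HasDerivWithinAt h
        (Real.exp (c*x) * c * Real.sqrt (V x ^ 2 + δ)
          + Real.exp (c*x) * (W x / (2 * Real.sqrt (V x ^ 2 + δ)))) (Set.Ioi x) x := by
      intro x hx
      have hxmem : x ∈ Set.Icc (0:ℝ) T := ⟨hx.1.le, hx.2.le.trans htT⟩
      have hnhds : Set.Icc (0:ℝ) T ∈ nhds x :=
        Icc_mem_nhds hx.1 (lt_of_lt_of_le hx.2 htT)
      have h1 : HasDerivAt (fun s => V s ^ 2 + δ) (W x) x :=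
        ((hW x hxmem).hasDerivAt hnhds).add_const δ
      have h2 : HasDerivAt (fun s => Real.sqrt (V s ^ 2 + δ))
          (W x / (2 * Real.sqrt (V x ^ 2 + δ))) x := h1.sqrt (ne_of_gt (hpos x))
      have h3 : HasDerivAt (fun s => Real.exp (c*s)) (Real.exp (c*x) * c) x := by
        have : HasDerivAt (fun s : ℝ => c * s) c x := by
          simpa using (hasDerivAt_id x).const_mul c
        exact this.exp
      exact (h3.mul h2).hasDerivWithinAt
    have hle : ∀ x ∈ Set.Ioo (0:ℝ) t,
        Real.exp (c*x) * c * Real.sqrt (V x ^ 2 + δ)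
          + Real.exp (c*x) * (W x / (2 * Real.sqrt (V x ^ 2 + δ))) ≤ φ x := by
      intro x hx
      have hxmem : x ∈ Set.Icc (0:ℝ) T := ⟨hx.1.le, hx.2.le.trans htT⟩
      set u := V x with hu
      set s := Real.sqrt (V x ^ 2 + δ) with hs
      have hs0 : 0 < s := Real.sqrt_pos.2 (hpos x)
      have hssq : s ^ 2 = u ^ 2 + δ := Real.sq_sqrt (hpos x).le
      have hus : u ≤ s := by
        nlinarith [hssq, hs0.le, hV0 x hxmem]
      have hqs : Real.sqrt δ ≤ s := by
        rw [hs]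
        exact Real.sqrt_le_sqrt (by nlinarith [sq_nonneg u])
      have hq2 : Real.sqrt δ ^ 2 = δ := Real.sq_sqrt hδ.le
      have hq0 : 0 ≤ Real.sqrt δ := Real.sqrt_nonneg δ
      have hWle : W x ≤ 2 * (g x * u - c * u ^ 2) := by
        have := hineq x hxmem; linarith
      have hexp : 0 < Real.exp (c*x) := Real.exp_pos _
      have hgx : 0 ≤ g x := hg0 x hxmem
      -- reduce to an inequality after multiplying by s
      have hkey : c * s ^ 2 + (g x * u - c * u ^ 2) ≤ (g x + c * Real.sqrt δ) * s := by
        nlinarith [mul_le_mul_of_nonneg_left hus hgx,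
          mul_le_mul_of_nonneg_left hqs (mul_nonneg hc hq0)]
      have hdiv : c * s + (g x * u - c * u ^ 2) / s ≤ g x + c * Real.sqrt δ := by
        have heq : c * s + (g x * u - c * u ^ 2) / s
            = (c * s ^ 2 + (g x * u - c * u ^ 2)) / s := by
          field_simp
        rw [heq, div_le_iff₀ hs0]
        nlinarith [hkey]
      have hW2 : W x / (2 * s) ≤ (g x * u - c * u ^ 2) / s := by
        rw [div_le_div_iff₀ (by positivity) hs0]
        nlinarith
      calc Real.exp (c*x) * c * s + Real.exp (c*x) * (W x / (2 * s))
          ≤ Real.exp (c*x) * c * s + Real.exp (c*x) * ((g x * u - c * u ^ 2) / s) := by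
            have := mul_le_mul_of_nonneg_left hW2 hexp.le
            linarith
        _ = Real.exp (c*x) * (c * s + (g x * u - c * u ^ 2) / s) := by ring
        _ ≤ Real.exp (c*x) * (g x + c * Real.sqrt δ) :=
            mul_le_mul_of_nonneg_left hdiv hexp.le
        _ = φ x := by rw [hφ]; ring
    have main : h t - h 0 ≤ ∫ y in (0:ℝ)..t, φ y :=
      intervalIntegral.sub_le_integral_of_hasDeriv_right_of_le ht0 hcont hderiv hφint hle
    have hφeq : (∫ y in (0:ℝ)..t, φ y) = A + c * Real.sqrt δ * B := by
      rw [hφ, intervalIntegral.integral_add, intervalIntegral.integral_const_mul]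
      · exact hgc.intervalIntegrable_of_Icc ht0
      · exact ((continuous_const.mul
          (Real.continuous_exp.comp (continuous_const.mul continuous_id))).continuousOn :
            ContinuousOn _ (Set.Icc 0 t)).intervalIntegrable_of_Icc ht0
    have hh0 : h 0 = Real.sqrt (V 0 ^ 2 + δ) := by simp [hh]
    rw [hφeq, hh0] at main
    have : h t = Real.exp (c*t) * Real.sqrt (V t ^ 2 + δ) := rfl
    linarith [main]
  -- pass to the limit δ → 0⁺
  have hVt0 : 0 ≤ V t := hV0 t ⟨ht0, htT⟩
  have hV00 : 0 ≤ V 0 := hV0 0 ⟨le_rfl, hT.le⟩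
  have key2 : Real.exp (c*t) * V t ≤ V 0 + A := by
    have htend : Filter.Tendsto
        (fun δ => Real.sqrt (V 0 ^ 2 + δ) + A + c * Real.sqrt δ * B)
        (nhdsWithin 0 (Set.Ioi 0)) (nhds (V 0 + A)) := by
      have hcont : ContinuousAt
          (fun δ : ℝ => Real.sqrt (V 0 ^ 2 + δ) + A + c * Real.sqrt δ * B) 0 := by
        apply ContinuousAt.add
        apply ContinuousAt.add
        · exact (Real.continuous_sqrt.comp (continuous_const.add continuous_id)).continuousAt
        · exact continuousAt_const
        · exact ((continuous_const.mul Real.continuous_sqrt).mul continuous_const).continuousAt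
      have := hcont.tendsto.mono_left (nhdsWithin_le_nhds : nhdsWithin (0:ℝ) (Set.Ioi 0) ≤ nhds 0)
      simpa [Real.sqrt_sq hV00] using this
    apply ge_of_tendsto htend
    filter_upwards [self_mem_nhdsWithin] with δ hδ
    have hδ' : (0:ℝ) < δ := hδ
    have h1 : V t ≤ Real.sqrt (V t ^ 2 + δ) := by
      have h2 : Real.sqrt (V t ^ 2 + δ) ^ 2 = V t ^ 2 + δ :=
        Real.sq_sqrt (by positivity)
      nlinarith [Real.sqrt_nonneg (V t ^ 2 + δ)]
    calc Real.exp (c*t) * V t ≤ Real.exp (c*t) * Real.sqrt (V t ^ 2 + δ) :=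
          mul_le_mul_of_nonneg_left h1 (Real.exp_pos _).le
      _ ≤ _ := key δ hδ'
  -- conclude
  have hexp : 0 < Real.exp (c*t) := Real.exp_pos _
  have hfin : V t ≤ Real.exp (-(c*t)) * (V 0 + A) := by
    rw [Real.exp_neg, ← div_eq_inv_mul, le_div_iff₀ hexp]
    linarith [key2]
  have hint : Real.exp (-(c*t)) * A = ∫ τ in (0:ℝ)..t, Real.exp (-c * (t - τ)) * g τ := by
    rw [hA, ← intervalIntegral.integral_const_mul]
    apply intervalIntegral.integral_congr
    intro τ _
    simp only [← mul_assoc, ← Real.exp_add]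
    ring_nf
  calc V t ≤ Real.exp (-(c*t)) * (V 0 + A) := hfin
    _ = Real.exp (-c*t) * V 0 + Real.exp (-(c*t)) * A := by ring_nf
    _ = _ := by rw [hint]
end

section
/- Let j ∈ ℤ, Ω ∈ ℝ, ε > 0, η > 0, K > 0, 1 ≤ q < ∞, 1 ≤ r < ∞, 0 < T ≤ ∞, and let A_j = { ξ ∈ ℝ³ : (3/4)·2^j ≤ |ξ| ≤ (8/3)·2^j }. Let F : (0,T) × A_j → [0,∞), F₀ : A_j → [0,∞) and G : (0,T) × A_j → [0,∞) be measurable functions such that F(t,ξ) ≤ K e^{−(η/3) Θ(|ξ|, Ωε) t} F₀(ξ) + K ∫₀ᵗ e^{−(η/3) Θ(|ξ|, Ωε)(t−τ)} G(τ,ξ) dτ for almost every (t,ξ) ∈ (0,T) × A_j, where Θ(ρ, Ωε) = ρ⁴/(Ω²ε² + ρ²). Then there is a constant C = C(η, r) > 0, independent of j, Ω, ε, T, q, K, such that ( ∫₀^T ( ∫_{A_j} F(t,ξ)^q dξ )^{r/q} dt )^{1/r} ≤ C K ( Ω²ε² 2^{−4j} + 2^{−2j} )^{1/r} [ ( ∫_{A_j}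 F₀(ξ)^q dξ )^{1/q} + ∫₀^T ( ∫_{A_j} G(τ,ξ)^q dξ )^{1/q} dτ ]. -/
open MeasureTheory ENNReal

set_option maxHeartbeats 1000000

open MeasureTheory ENNReal Set Real Function

section Helpers

lemma mySup_rpow {u : ℕ → ℝ≥0∞} {p : ℝ} (hp : 0 < p) :
    (⨆ n, u n) ^ p = ⨆ n, (u n) ^ p := by
  apply le_antisymm
  · have h : ∀ n, u n ≤ (⨆ n, (u n) ^ p) ^ (1 / p) := by
      intro n
      have : u n = ((u n) ^ p) ^ (1 / p) := by
        rw [← ENNReal.rpow_mul, mul_one_div_cancel hp.ne', ENNReal.rpow_one]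
      rw [this]
      exact ENNReal.rpow_le_rpow (le_iSup (fun n => (u n) ^ p) n) (by positivity)
    calc (⨆ n, u n) ^ p ≤ ((⨆ n, (u n) ^ p) ^ (1 / p)) ^ p :=
          ENNReal.rpow_le_rpow (iSup_le h) hp.le
      _ = ⨆ n, (u n) ^ p := by
          rw [← ENNReal.rpow_mul, one_div_mul_cancel hp.ne', ENNReal.rpow_one]
  · exact iSup_le fun n => ENNReal.rpow_le_rpow (le_iSup u n) hp.le

lemma myIndicator_mono {α : Type*} {s t : Set α} (hst : s ⊆ t) {u v : α → ℝ≥0∞}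
    (huv : ∀ x, u x ≤ v x) : ∀ x, s.indicator u x ≤ t.indicator v x := by
  intro x
  by_cases hx : x ∈ s
  · rw [Set.indicator_of_mem hx, Set.indicator_of_mem (hst hx)]; exact huv x
  · rw [Set.indicator_of_notMem hx]; exact bot_le

lemma myExpInt {b : ℝ} (hb : 0 < b) (a : ℝ) :
    ∫⁻ t in Ioi a, ENNReal.ofReal (rexp (-(b * (t - a)))) = ENNReal.ofReal b⁻¹ := by
  have h1 : (fun s : ℝ => s + a) ⁻¹' Ioi a = Ioi 0 := by
    ext x; simp [Set.mem_preimage, lt_add_iff_pos_left]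
  have hmap : (volume : Measure ℝ).restrict (Ioi a)
      = Measure.map (· + a) (volume.restrict (Ioi 0)) := by
    conv_lhs => rw [← map_add_right_eq_self volume a]
    rw [Measure.restrict_map (measurable_add_const a) measurableSet_Ioi, h1]
  rw [hmap, lintegral_map (by fun_prop) (measurable_add_const a)]
  simp only [add_sub_cancel_right, ← neg_mul]
  rw [← ofReal_integral_eq_lintegral_ofReal (exp_neg_integrableOn_Ioi 0 hb)
    (ae_of_all _ fun x => (exp_pos _).le)]
  congr 1
  have := integral_comp_mul_left_Ioi (fun x => rexp (-x)) 0 hb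
  simp only [mul_zero, ← neg_mul] at this
  rw [show (fun t => rexp (-b * t)) = (fun t => rexp (-b * t)) from rfl]
  calc ∫ t in Ioi (0:ℝ), rexp (-b * t) = b⁻¹ • ∫ x in Ioi (0:ℝ), rexp (-x) := by
        simpa [← neg_mul] using this
    _ = b⁻¹ := by rw [integral_exp_neg_Ioi_zero]; simp

lemma myMinkowski {α β : Type*} [MeasurableSpace α] [MeasurableSpace β]
    (μ : Measure α) (ν : Measure β) [SigmaFinite μ] [SigmaFinite ν]
    {p : ℝ} (hp : 1 ≤ p) {f : α → β → ℝ≥0∞} (hf : Measurable (Function.uncurry f)) :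
    (∫⁻ x, (∫⁻ y, f x y ∂ν) ^ p ∂μ) ^ (1 / p)
      ≤ ∫⁻ y, (∫⁻ x, f x y ^ p ∂μ) ^ (1 / p) ∂ν := by
  rcases eq_or_lt_of_le hp with hp1 | hp1
  · subst hp1
    simp only [ENNReal.rpow_one, one_div_one] at *
    exact le_of_eq (lintegral_lintegral_swap hf.aemeasurable)
  -- now 1 < p
  have hp0 : 0 < p := lt_trans one_pos hp1
  set J : ℝ≥0∞ := ∫⁻ y, (∫⁻ x, f x y ^ p ∂μ) ^ (1 / p) ∂ν with hJ
  set sμ := spanningSets μ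
  set sν := spanningSets ν
  set Φn : ℕ → α → ℝ≥0∞ := fun n x => ∫⁻ y in sν n, min (f x y) n ∂ν with hΦn
  have hΦnmeas : ∀ n, Measurable (Φn n) := by
    intro n
    exact Measurable.lintegral_prod_right (hf.min measurable_const)
  have hΦnbd : ∀ n x, Φn n x ≤ n * ν (sν n) := by
    intro n x
    calc Φn n x ≤ ∫⁻ _ in sν n, (n : ℝ≥0∞) ∂ν := lintegral_mono fun y => min_le_right _ _
      _ = n * ν (sν n) := by rw [setLIntegral_const]
  have hΦnltop : ∀ n x, Φn n x ≠ ∞ :=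
    fun n x => ((hΦnbd n x).trans_lt
      (ENNReal.mul_lt_top (ENNReal.natCast_lt_top n) (measure_spanningSets_lt_top ν n))).ne
  have hΦnmono : ∀ x, Monotone fun n => Φn n x := by
    intro x n m hnm
    refine le_trans (lintegral_mono fun y => min_le_min le_rfl (Nat.cast_le.2 hnm))
      (lintegral_mono' (Measure.restrict_mono (monotone_spanningSets ν hnm) le_rfl) le_rfl)
  have hsupΦ : ∀ x, ⨆ n, Φn n x = ∫⁻ y, f x y ∂ν := by
    intro x
    have heq : ∀ n, Φn n x = ∫⁻ y, (sν n).indicator (fun y => min (f x y) n) y ∂ν := by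
      intro n
      rw [lintegral_indicator (measurableSet_spanningSets ν n)]
    simp_rw [heq]
    rw [← lintegral_iSup]
    · congr 1
      ext y
      apply le_antisymm
      · exact iSup_le fun n =>
          (Set.indicator_le_self _ _ y).trans (min_le_left _ _)
      · obtain ⟨m, hm⟩ : ∃ m, y ∈ sν m := by
          have := iUnion_spanningSets ν
          have : y ∈ ⋃ i, sν i := by rw [this]; trivial
          exact Set.mem_iUnion.1 this
        have key : ∀ n : ℕ, min (f x y) n ≤ ⨆ k, (sν k).indicator (fun y => min (f x y) k) y := by
          intro n
          refine le_iSup_of_le (max n m) ?_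
          rw [Set.indicator_of_mem (monotone_spanningSets ν (le_max_right n m) hm)]
          exact min_le_min le_rfl (Nat.cast_le.2 (le_max_left n m))
        have hfin : f x y ≤ ⨆ n : ℕ, min (f x y) (n : ℝ≥0∞) := by
          rcases eq_or_ne (f x y) ∞ with htop | htop
          · have : ∀ n : ℕ, min (f x y) (n : ℝ≥0∞) = n := by
              intro n; rw [htop]; exact min_eq_right le_top
            simp_rw [this, ENNReal.iSup_natCast, htop]; exact le_rfl
          · obtain ⟨n, hn⟩ := ENNReal.exists_nat_gt htop
            exact le_iSup_of_le n (le_min le_rfl hn.le)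
        exact hfin.trans (iSup_le key)
    · intro n
      exact ((hf.of_uncurry_left).min measurable_const).indicator (measurableSet_spanningSets ν n)
    · intro n m hnm y
      exact myIndicator_mono (monotone_spanningSets ν hnm)
        (fun y => min_le_min le_rfl (Nat.cast_le.2 hnm)) y
  -- core argument for p > 1
  set c := Real.conjExponent p with hcdef
  have hpc : p.HolderConjugate c := Real.HolderConjugate.conjExponent hp1
  have hcp : c.HolderConjugate p := hpc.symm
  set In : ℕ → ℝ≥0∞ := fun n => ∫⁻ x in sμ n, Φn n x ^ p ∂μ with hInd
  have hInfin : ∀ n, In n ≠ ∞ := by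
    intro n
    have hb : In n ≤ ((n : ℝ≥0∞) * ν (sν n)) ^ p * μ (sμ n) := by
      calc In n ≤ ∫⁻ _ in sμ n, ((n : ℝ≥0∞) * ν (sν n)) ^ p ∂μ :=
            lintegral_mono fun x => ENNReal.rpow_le_rpow (hΦnbd n x) hp0.le
        _ = _ := by rw [setLIntegral_const]
    refine (hb.trans_lt (ENNReal.mul_lt_top ?_ (measure_spanningSets_lt_top μ n))).ne
    exact ENNReal.rpow_lt_top_of_nonneg hp0.le
      (ENNReal.mul_lt_top (ENNReal.natCast_lt_top n) (measure_spanningSets_lt_top ν n)).ne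
  have hInJ : ∀ n, In n ≤ J ^ p := by
    intro n
    have hΦdef : ∀ x, (∫⁻ y in sν n, min (f x y) (n : ℝ≥0∞) ∂ν) = Φn n x := fun x => rfl
    have hminmeas : Measurable fun z : α × β => min (f z.1 z.2) (n : ℝ≥0∞) :=
      hf.min measurable_const
    have hstep1 : In n = ∫⁻ x in sμ n, ∫⁻ y in sν n,
        Φn n x ^ (p - 1) * min (f x y) (n : ℝ≥0∞) ∂ν ∂μ := by
      refine lintegral_congr fun x => ?_
      rw [lintegral_const_mul _ ((hf.of_uncurry_left).min measurable_const), hΦdef x]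
      rcases eq_or_ne (Φn n x) 0 with h0 | h0
      · rw [h0, mul_zero, ENNReal.zero_rpow_of_pos hp0]
      · conv_lhs => rw [show p = (p - 1) + 1 by ring]
        rw [ENNReal.rpow_add _ _ h0 (hΦnltop n x), ENNReal.rpow_one]
    have hswap : ∫⁻ x in sμ n, ∫⁻ y in sν n,
          Φn n x ^ (p - 1) * min (f x y) (n : ℝ≥0∞) ∂ν ∂μ
        = ∫⁻ y in sν n, ∫⁻ x in sμ n,
          Φn n x ^ (p - 1) * min (f x y) (n : ℝ≥0∞) ∂μ ∂ν := by
      apply lintegral_lintegral_swap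
      exact ((((hΦnmeas n).comp measurable_fst).pow_const (p - 1)).mul hminmeas).aemeasurable
    have hH : ∀ y, ∫⁻ x in sμ n, Φn n x ^ (p - 1) * min (f x y) (n : ℝ≥0∞) ∂μ
        ≤ In n ^ (1 / c) * (∫⁻ x, f x y ^ p ∂μ) ^ (1 / p) := by
      intro y
      have hhold := ENNReal.lintegral_mul_le_Lp_mul_Lq (μ.restrict (sμ n)) hcp
        (f := fun x => Φn n x ^ (p - 1)) (g := fun x => min (f x y) (n : ℝ≥0∞))
        (((hΦnmeas n).pow_const (p - 1)).aemeasurable)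
        ((hf.of_uncurry_right.min measurable_const).aemeasurable)
      refine le_trans hhold ?_
      have h1 : (∫⁻ x in sμ n, (Φn n x ^ (p - 1)) ^ c ∂μ) ^ (1 / c) = In n ^ (1 / c) := by
        congr 1
        refine lintegral_congr fun x => ?_
        rw [← ENNReal.rpow_mul, hpc.sub_one_mul_conj]
      rw [h1]
      refine mul_le_mul' le_rfl (ENNReal.rpow_le_rpow ?_ hpc.one_div_nonneg)
      exact (lintegral_mono fun x =>
        ENNReal.rpow_le_rpow (min_le_left _ _) hp0.le).trans (setLIntegral_le_lintegral _ _)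
    have hchain : In n ≤ In n ^ (1 / c) * J := by
      calc In n = _ := hstep1
        _ = _ := hswap
        _ ≤ ∫⁻ y in sν n, In n ^ (1 / c) * (∫⁻ x, f x y ^ p ∂μ) ^ (1 / p) ∂ν :=
            lintegral_mono hH
        _ = In n ^ (1 / c) * ∫⁻ y in sν n, (∫⁻ x, f x y ^ p ∂μ) ^ (1 / p) ∂ν :=
            lintegral_const_mul' _ _ (ENNReal.rpow_ne_top_of_nonneg hcp.one_div_nonneg (hInfin n))
        _ ≤ In n ^ (1 / c) * J := mul_le_mul' le_rfl (setLIntegral_le_lintegral _ _)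
    rcases eq_or_ne (In n) 0 with h0 | h0
    · rw [h0]; exact bot_le
    · have hone : 1 / c + 1 / p = 1 := by
        rw [one_div, one_div]; exact hcp.inv_add_inv_eq_inv.trans inv_one
      have hfac0 : In n ^ (1 / c) ≠ 0 := by
        simp [ENNReal.rpow_eq_zero_iff, h0, hInfin n]
      have hfactop : In n ^ (1 / c) ≠ ∞ :=
        ENNReal.rpow_ne_top_of_nonneg hcp.one_div_nonneg (hInfin n)
      have hkey : In n ^ (1 / c) * In n ^ (1 / p) ≤ In n ^ (1 / c) * J := by
        rw [← ENNReal.rpow_add _ _ h0 (hInfin n), hone, ENNReal.rpow_one]; exact hchain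
      have hfin2 : In n ^ (1 / p) ≤ J := (ENNReal.mul_le_mul_iff_right hfac0 hfactop).1 hkey
      calc In n = (In n ^ (1 / p)) ^ p := by
            rw [← ENNReal.rpow_mul, one_div_mul_cancel hp0.ne', ENNReal.rpow_one]
        _ ≤ J ^ p := ENNReal.rpow_le_rpow hfin2 hp0.le
  have hIle : ∫⁻ x, (∫⁻ y, f x y ∂ν) ^ p ∂μ ≤ J ^ p := by
    have hind : ∀ x, (∫⁻ y, f x y ∂ν) ^ p
        = ⨆ n, (sμ n).indicator (fun x => Φn n x ^ p) x := by
      intro x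
      rw [← hsupΦ x, mySup_rpow hp0]
      apply le_antisymm
      · refine iSup_le fun n => ?_
        obtain ⟨m, hm⟩ : ∃ m, x ∈ sμ m := by
          have hx : x ∈ ⋃ i, sμ i := by rw [iUnion_spanningSets]; trivial
          exact Set.mem_iUnion.1 hx
        refine le_iSup_of_le (max n m) ?_
        rw [Set.indicator_of_mem (monotone_spanningSets μ (le_max_right n m) hm)]
        exact ENNReal.rpow_le_rpow (hΦnmono x (le_max_left n m)) hp0.le
      · exact iSup_le fun n => (Set.indicator_le_self _ _ x).trans
          (le_iSup (fun k => Φn k x ^ p) n)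
    calc ∫⁻ x, (∫⁻ y, f x y ∂ν) ^ p ∂μ
        = ∫⁻ x, ⨆ n, (sμ n).indicator (fun x => Φn n x ^ p) x ∂μ := lintegral_congr hind
      _ = ⨆ n, ∫⁻ x, (sμ n).indicator (fun x => Φn n x ^ p) x ∂μ := by
          refine lintegral_iSup (fun n => ?_) (fun n m hnm x => ?_)
          · exact ((hΦnmeas n).pow_const p).indicator (measurableSet_spanningSets μ n)
          · exact myIndicator_mono (monotone_spanningSets μ hnm)
              (fun x => ENNReal.rpow_le_rpow (hΦnmono x hnm) hp0.le) x
      _ = ⨆ n, In n := by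
          refine iSup_congr fun n => ?_
          rw [lintegral_indicator (measurableSet_spanningSets μ n)]
      _ ≤ J ^ p := iSup_le hInJ
  calc (∫⁻ x, (∫⁻ y, f x y ∂ν) ^ p ∂μ) ^ (1 / p) ≤ (J ^ p) ^ (1 / p) :=
        ENNReal.rpow_le_rpow hIle (by positivity)
    _ = J := by rw [← ENNReal.rpow_mul, mul_one_div_cancel hp0.ne', ENNReal.rpow_one]

lemma myLq_const_mul {α : Type*} [MeasurableSpace α] (μ : Measure α) {q : ℝ} (hq : 0 < q)
    (c : ℝ≥0∞) {g : α → ℝ≥0∞} (hg : Measurable g) :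
    (∫⁻ x, (c * g x) ^ q ∂μ) ^ (1 / q) = c * (∫⁻ x, g x ^ q ∂μ) ^ (1 / q) := by
  simp_rw [ENNReal.mul_rpow_of_nonneg _ _ hq.le]
  rw [lintegral_const_mul _ (hg.pow_const q),
    ENNReal.mul_rpow_of_nonneg _ _ (by positivity : (0:ℝ) ≤ 1 / q),
    ← ENNReal.rpow_mul, mul_one_div_cancel hq.ne', ENNReal.rpow_one]

end Helpers


/-- The dissipation rate `Θ(ρ, σ) = ρ⁴/(σ² + ρ²)` of the linearized rotating
Navier–Stokes–Korteweg system at Fourier radius `ρ`, with rotation–Mach parameter `σ`. -/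
noncomputable def Theta (ρ σ : ℝ) : ℝ := ρ ^ 4 / (σ ^ 2 + ρ ^ 2)

/-- The dyadic annulus `A_j = {ξ ∈ ℝ³ : (3/4)·2^j ≤ |ξ| ≤ (8/3)·2^j}`. -/
def annulus (j : ℤ) : Set (EuclideanSpace ℝ (Fin 3)) :=
  {ξ | (3 / 4) * (2:ℝ) ^ j ≤ ‖ξ‖ ∧ ‖ξ‖ ≤ (8 / 3) * (2:ℝ) ^ j}

/-- The time interval `(0, T)` for `0 < T ≤ ∞`, as a subset of `ℝ`. -/
def timeSet (T : ℝ≥0∞) : Set ℝ := {t : ℝ | 0 < t ∧ ENNReal.ofReal t < T}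

/-- the `L^r`-in-time, `L^q`-in-frequency estimate on a dyadic annulus
coming from the pointwise semigroup bound
`F(t,ξ) ≤ K e^{−(η/3)Θ(|ξ|,Ωε)t} F₀(ξ) + K ∫₀ᵗ e^{−(η/3)Θ(|ξ|,Ωε)(t−τ)} G(τ,ξ) dτ`:
there is `C = C(η,r) > 0`, independent of `j, Ω, ε, T, q, K`, such that
`‖F‖_{L^r((0,T); L^q(A_j))}
  ≤ C K (Ω²ε² 2^{−4j} + 2^{−2j})^{1/r} (‖F₀‖_{L^q(A_j)} + ‖G‖_{L^1((0,T); L^q(A_j))})`. -/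
theorem dyadic_semigroup_LrLq_estimate (η r : ℝ) (hη : 0 < η) (hr : 1 ≤ r) :
    ∃ C : ℝ, 0 < C ∧
      ∀ (j : ℤ) (Ω ε : ℝ), 0 < ε →
      ∀ (T : ℝ≥0∞), 0 < T →
      ∀ (q : ℝ), 1 ≤ q →
      ∀ (K : ℝ), 0 < K →
      ∀ (F : ℝ → EuclideanSpace ℝ (Fin 3) → ℝ) (F₀ : EuclideanSpace ℝ (Fin 3) → ℝ)
        (G : ℝ → EuclideanSpace ℝ (Fin 3) → ℝ),
        Measurable (Function.uncurry F) → Measurable F₀ →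
        Measurable (Function.uncurry G) →
        (∀ t ξ, 0 ≤ F t ξ) → (∀ ξ, 0 ≤ F₀ ξ) → (∀ t ξ, 0 ≤ G t ξ) →
        (∀ᵐ p : ℝ × EuclideanSpace ℝ (Fin 3)
            ∂((volume.restrict (timeSet T)).prod (volume.restrict (annulus j))),
          ENNReal.ofReal (F p.1 p.2)
            ≤ ENNReal.ofReal
                (K * Real.exp (-(η / 3) * Theta ‖p.2‖ (Ω * ε) * p.1) * F₀ p.2)
              + ENNReal.ofReal K *
                  ∫⁻ τ in Set.Ioc (0:ℝ) p.1,
                    ENNReal.ofReal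
                      (Real.exp (-(η / 3) * Theta ‖p.2‖ (Ω * ε) * (p.1 - τ)) * G τ p.2)) →
        (∫⁻ t in timeSet T,
            (∫⁻ ξ in annulus j, ENNReal.ofReal (F t ξ) ^ q) ^ (r / q)) ^ (1 / r)
          ≤ ENNReal.ofReal
              (C * K * (Ω ^ 2 * ε ^ 2 * (2:ℝ) ^ (-(4:ℤ) * j) + (2:ℝ) ^ (-(2:ℤ) * j)) ^ (1 / r))
            * ((∫⁻ ξ in annulus j, ENNReal.ofReal (F₀ ξ) ^ q) ^ (1 / q)
                + ∫⁻ τ in timeSet T,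
                    (∫⁻ ξ in annulus j, ENNReal.ofReal (G τ ξ) ^ q) ^ (1 / q)) := by
  have hr0 : (0:ℝ) < r := lt_of_lt_of_le one_pos hr
  refine ⟨(96 / η) ^ (1 / r), Real.rpow_pos_of_pos (by positivity) _, ?_⟩
  intro j Ω ε hε T hT q hq K hK F F₀ G hFm hF0m hGm hFpos hF0pos hGpos hFbd
  have hq0 : (0:ℝ) < q := lt_of_lt_of_le one_pos hq
  -- basic constants
  have hdpos : (0:ℝ) < (2:ℝ) ^ j := zpow_pos (by norm_num) j
  set d : ℝ := (2:ℝ) ^ j with hd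
  set A : ℝ := Ω ^ 2 * ε ^ 2 with hA
  have hA0 : 0 ≤ A := by rw [hA]; positivity
  have hden0 : 0 < A + d ^ 2 := by positivity
  set lam : ℝ := (η / 96) * d ^ 4 / (A + d ^ 2) with hlam
  have hlampos : 0 < lam := by
    apply div_pos (by positivity) hden0
  -- the dissipation bound on the annulus
  have hTheta : ∀ ξ : EuclideanSpace ℝ (Fin 3), ξ ∈ annulus j → lam ≤ η / 3 * Theta ‖ξ‖ (Ω * ε) := by
    intro ξ hξ
    obtain ⟨h1, h2⟩ := hξ
    have hρ0 : (0:ℝ) ≤ ‖ξ‖ := norm_nonneg ξ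
    have hden : (0:ℝ) < (Ω * ε) ^ 2 + ‖ξ‖ ^ 2 := by
      have : (0:ℝ) < ‖ξ‖ := lt_of_lt_of_le (by positivity) h1
      positivity
    have hAeq : (Ω * ε) ^ 2 = A := by rw [hA]; ring
    rw [Theta, ← mul_div_assoc, le_div_iff₀ hden, hlam, div_mul_eq_mul_div,
      div_le_iff₀ hden0, hAeq]
    have e1 : (3 / 4 * d) ^ 4 ≤ ‖ξ‖ ^ 4 := by
      apply pow_le_pow_left₀ (by positivity) h1
    have e2 : ‖ξ‖ ^ 2 ≤ (8 / 3 * d) ^ 2 := pow_le_pow_left₀ hρ0 h2 2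
    have k1 : η / 96 * d ^ 4 * A ≤ η / 3 * ‖ξ‖ ^ 4 * A := by
      apply mul_le_mul_of_nonneg_right _ hA0
      nlinarith [pow_nonneg hdpos.le 4, hη.le]
    have k2 : η / 96 * d ^ 4 * ‖ξ‖ ^ 2 ≤ η / 3 * ‖ξ‖ ^ 4 * d ^ 2 := by
      nlinarith [mul_le_mul_of_nonneg_left e2 (by positivity : (0:ℝ) ≤ η / 96 * d ^ 4),
        mul_le_mul_of_nonneg_right e1 (by positivity : (0:ℝ) ≤ η / 3 * d ^ 2),
        pow_nonneg hdpos.le 6]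
    nlinarith [k1, k2]
  -- exponential kernel
  set kk : ℝ → ℝ≥0∞ := fun s => ENNReal.ofReal (rexp (-(lam * s))) with hkkdef
  have hkk : Measurable kk :=
    ENNReal.measurable_ofReal.comp (Real.measurable_exp.comp
      ((measurable_const.mul measurable_id).neg))
  -- measurable sets
  have hannm : MeasurableSet (annulus j) := by
    have : annulus j = (fun ξ : EuclideanSpace ℝ (Fin 3) => ‖ξ‖) ⁻¹'
        (Icc ((3/4) * (2:ℝ) ^ j) ((8/3) * (2:ℝ) ^ j)) := by
      ext ξ; simp [annulus, Set.mem_Icc]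
    rw [this]; exact measurable_norm measurableSet_Icc
  have htsm : MeasurableSet (timeSet T) := by
    have : timeSet T = Ioi 0 ∩ (ENNReal.ofReal ⁻¹' (Iio T)) := by
      ext t; simp [timeSet, Set.mem_Ioi]
    rw [this]
    exact measurableSet_Ioi.inter (ENNReal.measurable_ofReal measurableSet_Iio)
  -- norms in the ξ variable
  set N0 : ℝ≥0∞ := (∫⁻ ξ in annulus j, ENNReal.ofReal (F₀ ξ) ^ q) ^ (1/q) with hN0def
  set NG : ℝ → ℝ≥0∞ := fun τ => (∫⁻ ξ in annulus j, ENNReal.ofReal (G τ ξ) ^ q) ^ (1/q)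
    with hNGdef
  have hNGm : Measurable NG := by
    apply Measurable.pow_const
    exact Measurable.lintegral_prod_right ((ENNReal.measurable_ofReal.comp hGm).pow_const q)
  -- Step A : a.e. pointwise bound with ξ-uniform exponential rate
  have hmem : ∀ᵐ p : ℝ × EuclideanSpace ℝ (Fin 3)
      ∂((volume.restrict (timeSet T)).prod (volume.restrict (annulus j))),
      p.1 ∈ timeSet T ∧ p.2 ∈ annulus j := by
    rw [Measure.prod_restrict]
    filter_upwards [ae_restrict_mem (htsm.prod hannm)] with p hp
    exact ⟨hp.1, hp.2⟩
  have hae2 : ∀ᵐ p : ℝ × EuclideanSpace ℝ (Fin 3)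
      ∂((volume.restrict (timeSet T)).prod (volume.restrict (annulus j))),
      ENNReal.ofReal (F p.1 p.2)
        ≤ ENNReal.ofReal K * kk p.1 * ENNReal.ofReal (F₀ p.2)
          + ENNReal.ofReal K *
              ∫⁻ τ in Set.Ioc (0:ℝ) p.1, kk (p.1 - τ) * ENNReal.ofReal (G τ p.2) := by
    filter_upwards [hFbd, hmem] with p hp hpmem
    obtain ⟨hpt, hpξ⟩ := hpmem
    have hexp : ∀ s : ℝ, 0 ≤ s →
        rexp (-(η / 3) * Theta ‖p.2‖ (Ω * ε) * s) ≤ rexp (-(lam * s)) := by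
      intro s hs
      apply Real.exp_le_exp.2
      have := mul_le_mul_of_nonneg_right (hTheta p.2 hpξ) hs
      nlinarith [this]
    refine le_trans hp (add_le_add ?_ ?_)
    · rw [ENNReal.ofReal_mul (by positivity), ENNReal.ofReal_mul hK.le]
      exact mul_le_mul' (mul_le_mul' le_rfl
        (ENNReal.ofReal_le_ofReal (hexp p.1 hpt.1.le))) le_rfl
    · refine mul_le_mul' le_rfl (lintegral_mono_ae ?_)
      filter_upwards [ae_restrict_mem measurableSet_Ioc] with τ hτ
      rw [ENNReal.ofReal_mul (exp_pos _).le]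
      exact mul_le_mul' (ENNReal.ofReal_le_ofReal (hexp _ (by linarith [hτ.2]))) le_rfl
  have hae3 := Measure.ae_ae_of_ae_prod hae2
  -- Step B : L^q bound in ξ, for a.e. t
  have hB : ∀ᵐ t ∂(volume.restrict (timeSet T)),
      (∫⁻ ξ in annulus j, ENNReal.ofReal (F t ξ) ^ q) ^ (1/q)
        ≤ ENNReal.ofReal K * kk t * N0
          + ENNReal.ofReal K * ∫⁻ τ in Set.Ioc (0:ℝ) t, kk (t - τ) * NG τ := by
    filter_upwards [hae3] with t ht
    have hT1m : Measurable fun ξ : EuclideanSpace ℝ (Fin 3) =>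
        ENNReal.ofReal K * kk t * ENNReal.ofReal (F₀ ξ) :=
      measurable_const.mul (ENNReal.measurable_ofReal.comp hF0m)
    have hGgm : Measurable (Function.uncurry fun (ξ : EuclideanSpace ℝ (Fin 3)) (τ : ℝ) =>
        kk (t - τ) * ENNReal.ofReal (G τ ξ)) := by
      refine Measurable.mul (f := fun p : EuclideanSpace ℝ (Fin 3) × ℝ => kk (t - p.2))
        (g := fun p => ENNReal.ofReal (G p.2 p.1)) ?_ ?_
      · exact hkk.comp (measurable_const.sub measurable_snd)
      · exact ENNReal.measurable_ofReal.comp (hGm.comp measurable_swap)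
    have hT2m : Measurable fun ξ : EuclideanSpace ℝ (Fin 3) =>
        ENNReal.ofReal K * ∫⁻ τ in Set.Ioc (0:ℝ) t, kk (t - τ) * ENNReal.ofReal (G τ ξ) :=
      measurable_const.mul (Measurable.lintegral_prod_right hGgm)
    calc (∫⁻ ξ in annulus j, ENNReal.ofReal (F t ξ) ^ q) ^ (1/q)
        ≤ (∫⁻ ξ in annulus j,
            (ENNReal.ofReal K * kk t * ENNReal.ofReal (F₀ ξ)
              + ENNReal.ofReal K *
                ∫⁻ τ in Set.Ioc (0:ℝ) t, kk (t - τ) * ENNReal.ofReal (G τ ξ)) ^ q) ^ (1/q) := by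
          apply ENNReal.rpow_le_rpow _ (by positivity)
          refine lintegral_mono_ae (ht.mono fun ξ h => ENNReal.rpow_le_rpow h hq0.le)
      _ ≤ (∫⁻ ξ in annulus j,
            (ENNReal.ofReal K * kk t * ENNReal.ofReal (F₀ ξ)) ^ q) ^ (1/q)
          + (∫⁻ ξ in annulus j, (ENNReal.ofReal K *
              ∫⁻ τ in Set.Ioc (0:ℝ) t, kk (t - τ) * ENNReal.ofReal (G τ ξ)) ^ q) ^ (1/q) :=
          ENNReal.lintegral_Lp_add_le hT1m.aemeasurable hT2m.aemeasurable hq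
      _ ≤ ENNReal.ofReal K * kk t * N0
          + ENNReal.ofReal K * ∫⁻ τ in Set.Ioc (0:ℝ) t, kk (t - τ) * NG τ := by
          refine add_le_add (le_of_eq ?_) ?_
          · exact myLq_const_mul _ hq0 _ (ENNReal.measurable_ofReal.comp hF0m)
          · calc (∫⁻ ξ in annulus j, (ENNReal.ofReal K *
                  ∫⁻ τ in Set.Ioc (0:ℝ) t, kk (t - τ) * ENNReal.ofReal (G τ ξ)) ^ q) ^ (1/q)
                = ENNReal.ofReal K * (∫⁻ ξ in annulus j,
                    (∫⁻ τ in Set.Ioc (0:ℝ) t, kk (t - τ) * ENNReal.ofReal (G τ ξ)) ^ q) ^ (1/q) :=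
                  myLq_const_mul _ hq0 _ (Measurable.lintegral_prod_right hGgm)
              _ ≤ ENNReal.ofReal K * ∫⁻ τ in Set.Ioc (0:ℝ) t, kk (t - τ) * NG τ := by
                  refine mul_le_mul' le_rfl ?_
                  refine le_trans (myMinkowski (volume.restrict (annulus j))
                    (volume.restrict (Set.Ioc (0:ℝ) t)) hq hGgm)
                    (le_of_eq (lintegral_congr fun τ => ?_))
                  exact myLq_const_mul _ hq0 (kk (t - τ))
                    (ENNReal.measurable_ofReal.comp hGm.of_uncurry_left)
    -- Step C : L^r bound in t
  set c2 : ℝ≥0∞ := (ENNReal.ofReal ((lam * r)⁻¹)) ^ (1/r) with hc2def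
  have hlr : 0 < lam * r := by positivity
  have hkkr : ∀ s : ℝ, kk s ^ r = ENNReal.ofReal (rexp (-(lam * r * s))) := by
    intro s
    simp only [hkkdef]
    rw [ENNReal.ofReal_rpow_of_pos (exp_pos _), ← Real.exp_mul]
    congr 1; ring
  set w : ℝ → ℝ → ℝ≥0∞ :=
    fun t τ => ((Set.Ioc (0:ℝ) t) ∩ timeSet T).indicator (fun τ => kk (t - τ) * NG τ) τ
    with hwdef
  have hwm : Measurable (Function.uncurry w) := by
    have hset : MeasurableSet {p : ℝ × ℝ | p.2 ∈ Set.Ioc 0 p.1 ∩ timeSet T} := by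
      have hs2 : {p : ℝ × ℝ | p.2 ∈ Set.Ioc 0 p.1 ∩ timeSet T}
          = ({p : ℝ × ℝ | 0 < p.2} ∩ {p : ℝ × ℝ | p.2 ≤ p.1}) ∩ (Prod.snd ⁻¹' timeSet T) := by
        ext p; simp [Set.mem_Ioc, and_assoc]
      rw [hs2]
      exact ((measurableSet_lt measurable_const measurable_snd).inter
        (measurableSet_le measurable_snd measurable_fst)).inter (htsm.preimage measurable_snd)
    have huw : Function.uncurry w = fun p : ℝ × ℝ =>
        Set.indicator {p : ℝ × ℝ | p.2 ∈ Set.Ioc 0 p.1 ∩ timeSet T}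
          (fun p => kk (p.1 - p.2) * NG p.2) p := by
      classical
      ext p
      simp only [Function.uncurry, hwdef]
      rw [Set.indicator_apply, Set.indicator_apply]
      simp only [Set.mem_setOf_eq]
    rw [huw]
    exact Measurable.indicator
      ((hkk.comp (measurable_fst.sub measurable_snd)).mul (hNGm.comp measurable_snd)) hset
  have hwa : ∀ᵐ t ∂(volume.restrict (timeSet T)),
      (∫⁻ τ in Set.Ioc (0:ℝ) t, kk (t - τ) * NG τ) = ∫⁻ τ, w t τ := by
    filter_upwards [ae_restrict_mem htsm] with t ht
    have hsub : Set.Ioc (0:ℝ) t ∩ timeSet T = Set.Ioc (0:ℝ) t :=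
      Set.inter_eq_left.2 fun τ hτ =>
        ⟨hτ.1, lt_of_le_of_lt (ENNReal.ofReal_le_ofReal hτ.2) ht.2⟩
    symm
    simp only [hwdef]
    rw [lintegral_indicator (measurableSet_Ioc.inter htsm), hsub]
  have hIci : ∀ τ : ℝ, ∫⁻ t in timeSet T, (Set.Ici τ).indicator (fun t => kk (t - τ) ^ r) t
      ≤ ENNReal.ofReal ((lam * r)⁻¹) := by
    intro τ
    calc ∫⁻ t in timeSet T, (Set.Ici τ).indicator (fun t => kk (t - τ) ^ r) t
        ≤ ∫⁻ t, (Set.Ici τ).indicator (fun t => kk (t - τ) ^ r) t :=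
          lintegral_mono' Measure.restrict_le_self le_rfl
      _ = ∫⁻ t in Set.Ici τ, kk (t - τ) ^ r := lintegral_indicator measurableSet_Ici _
      _ = ∫⁻ t in Set.Ioi τ, kk (t - τ) ^ r := by rw [restrict_Ioi_eq_restrict_Ici]
      _ = ENNReal.ofReal ((lam * r)⁻¹) := by
          simp_rw [hkkr]; exact myExpInt hlr τ
  have hτb : ∀ τ : ℝ, (∫⁻ t in timeSet T, w t τ ^ r) ^ (1/r)
      ≤ (timeSet T).indicator (fun τ => NG τ * c2) τ := by
    intro τ
    by_cases hτ : τ ∈ timeSet T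
    · rw [Set.indicator_of_mem hτ]
      have hwb : ∀ t, w t τ ^ r
          ≤ (Set.Ici τ).indicator (fun t => kk (t - τ) ^ r) t * NG τ ^ r := by
        intro t
        by_cases hmem2 : τ ∈ Set.Ioc (0:ℝ) t ∩ timeSet T
        · simp only [hwdef]
          rw [Set.indicator_of_mem hmem2,
            Set.indicator_of_mem (show t ∈ Set.Ici τ from hmem2.1.2),
            ENNReal.mul_rpow_of_nonneg _ _ hr0.le]
        · simp only [hwdef]
          rw [Set.indicator_of_notMem hmem2, ENNReal.zero_rpow_of_pos hr0]
          exact bot_le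
      calc (∫⁻ t in timeSet T, w t τ ^ r) ^ (1/r)
          ≤ ((∫⁻ t in timeSet T, (Set.Ici τ).indicator (fun t => kk (t - τ) ^ r) t)
              * NG τ ^ r) ^ (1/r) := by
            apply ENNReal.rpow_le_rpow _ (by positivity)
            rw [← lintegral_mul_const (μ := volume.restrict (timeSet T)) (NG τ ^ r)
              (f := fun t => (Set.Ici τ).indicator (fun t => kk (t - τ) ^ r) t)
              (Measurable.indicator ((hkk.comp
                (measurable_id.sub measurable_const)).pow_const r) measurableSet_Ici)]
            exact lintegral_mono hwb
        _ ≤ (ENNReal.ofReal ((lam * r)⁻¹) * NG τ ^ r) ^ (1/r) :=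
            ENNReal.rpow_le_rpow (mul_le_mul' (hIci τ) le_rfl) (by positivity)
        _ = NG τ * c2 := by
            rw [ENNReal.mul_rpow_of_nonneg _ _ (by positivity : (0:ℝ) ≤ 1/r),
              ← ENNReal.rpow_mul, mul_one_div_cancel hr0.ne', ENNReal.rpow_one, mul_comm]
    · rw [Set.indicator_of_notMem hτ]
      have hw0 : ∀ t, w t τ = 0 := by
        intro t; simp only [hwdef]
        exact Set.indicator_of_notMem (fun hc => hτ hc.2) _
      simp only [hw0, ENNReal.zero_rpow_of_pos hr0, lintegral_zero]
      rw [ENNReal.zero_rpow_of_pos (by positivity)]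
  have hterm1 : (∫⁻ t in timeSet T, (ENNReal.ofReal K * kk t * N0) ^ r) ^ (1/r)
      ≤ ENNReal.ofReal K * c2 * N0 := by
    have hpt : ∀ t : ℝ, (ENNReal.ofReal K * kk t * N0) ^ r
        = (ENNReal.ofReal K * N0) ^ r * kk t ^ r := by
      intro t
      rw [mul_right_comm, ENNReal.mul_rpow_of_nonneg _ _ hr0.le]
    calc (∫⁻ t in timeSet T, (ENNReal.ofReal K * kk t * N0) ^ r) ^ (1/r)
        = ((ENNReal.ofReal K * N0) ^ r * ∫⁻ t in timeSet T, kk t ^ r) ^ (1/r) := by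
          simp_rw [hpt]; rw [lintegral_const_mul _ (hkk.pow_const r)]
      _ ≤ ((ENNReal.ofReal K * N0) ^ r * ENNReal.ofReal ((lam * r)⁻¹)) ^ (1/r) := by
          apply ENNReal.rpow_le_rpow _ (by positivity)
          refine mul_le_mul' le_rfl ?_
          calc ∫⁻ t in timeSet T, kk t ^ r ≤ ∫⁻ t in Set.Ioi (0:ℝ), kk t ^ r :=
                lintegral_mono' (Measure.restrict_mono (fun t ht => ht.1) le_rfl) le_rfl
            _ = ENNReal.ofReal ((lam * r)⁻¹) := by
                simp_rw [hkkr]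
                simpa [sub_zero] using myExpInt hlr 0
      _ = ENNReal.ofReal K * c2 * N0 := by
          rw [ENNReal.mul_rpow_of_nonneg _ _ (by positivity : (0:ℝ) ≤ 1/r),
            ← ENNReal.rpow_mul, mul_one_div_cancel hr0.ne', ENNReal.rpow_one]
          ring
  have hterm2 : (∫⁻ t in timeSet T, (ENNReal.ofReal K * ∫⁻ τ, w t τ) ^ r) ^ (1/r)
      ≤ ENNReal.ofReal K * c2 * ∫⁻ τ in timeSet T, NG τ := by
    calc (∫⁻ t in timeSet T, (ENNReal.ofReal K * ∫⁻ τ, w t τ) ^ r) ^ (1/r)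
        = ENNReal.ofReal K * (∫⁻ t in timeSet T, (∫⁻ τ, w t τ) ^ r) ^ (1/r) :=
          myLq_const_mul _ hr0 _ (Measurable.lintegral_prod_right hwm)
      _ ≤ ENNReal.ofReal K * ∫⁻ τ, ((∫⁻ t in timeSet T, w t τ ^ r) ^ (1/r)) :=
          mul_le_mul' le_rfl (myMinkowski (volume.restrict (timeSet T)) volume hr hwm)
      _ ≤ ENNReal.ofReal K * ∫⁻ τ, (timeSet T).indicator (fun τ => NG τ * c2) τ :=
          mul_le_mul' le_rfl (lintegral_mono hτb)
      _ = ENNReal.ofReal K * c2 * ∫⁻ τ in timeSet T, NG τ := by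
          rw [lintegral_indicator htsm, lintegral_mul_const _ hNGm]
          ring
  have hconst : ENNReal.ofReal K * c2
      ≤ ENNReal.ofReal ((96 / η) ^ (1/r) * K
          * (A * (2:ℝ) ^ (-(4:ℤ) * j) + (2:ℝ) ^ (-(2:ℤ) * j)) ^ (1/r)) := by
    have hXpos : (0:ℝ) < A * (2:ℝ) ^ (-(4:ℤ) * j) + (2:ℝ) ^ (-(2:ℤ) * j) := by
      have h1 : (0:ℝ) < (2:ℝ) ^ (-(4:ℤ) * j) := zpow_pos (by norm_num) _
      have h2 : (0:ℝ) < (2:ℝ) ^ (-(2:ℤ) * j) := zpow_pos (by norm_num) _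
      nlinarith [mul_nonneg hA0 h1.le]
    have e4 : (2:ℝ) ^ (-(4:ℤ) * j) = (d ^ 4)⁻¹ := by
      rw [hd, ← zpow_natCast ((2:ℝ) ^ j) 4, ← zpow_mul, ← zpow_neg]
      congr 1; push_cast; ring
    have e2 : (2:ℝ) ^ (-(2:ℤ) * j) = (d ^ 2)⁻¹ := by
      rw [hd, ← zpow_natCast ((2:ℝ) ^ j) 2, ← zpow_mul, ← zpow_neg]
      congr 1; push_cast; ring
    have hlaminv : lam⁻¹
        = 96 / η * (A * (2:ℝ) ^ (-(4:ℤ) * j) + (2:ℝ) ^ (-(2:ℤ) * j)) := by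
      rw [e4, e2, hlam]
      field_simp
    have hc2le : c2 ≤ ENNReal.ofReal ((96 / η
        * (A * (2:ℝ) ^ (-(4:ℤ) * j) + (2:ℝ) ^ (-(2:ℤ) * j))) ^ (1/r)) := by
      calc c2 ≤ (ENNReal.ofReal (lam⁻¹)) ^ (1/r) := by
            rw [hc2def]
            apply ENNReal.rpow_le_rpow _ (by positivity)
            apply ENNReal.ofReal_le_ofReal
            exact inv_anti₀ hlampos (le_mul_of_one_le_right hlampos.le hr)
        _ = ENNReal.ofReal ((lam⁻¹) ^ (1/r)) := ENNReal.ofReal_rpow_of_pos (by positivity)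
        _ = _ := by rw [hlaminv]
    calc ENNReal.ofReal K * c2
        ≤ ENNReal.ofReal K * ENNReal.ofReal ((96 / η
            * (A * (2:ℝ) ^ (-(4:ℤ) * j) + (2:ℝ) ^ (-(2:ℤ) * j))) ^ (1/r)) :=
          mul_le_mul' le_rfl hc2le
      _ = ENNReal.ofReal (K * (96 / η
            * (A * (2:ℝ) ^ (-(4:ℤ) * j) + (2:ℝ) ^ (-(2:ℤ) * j))) ^ (1/r)) :=
          (ENNReal.ofReal_mul hK.le).symm
      _ = _ := by
          congr 1
          rw [Real.mul_rpow (by positivity) hXpos.le]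
          ring
  calc (∫⁻ t in timeSet T,
          (∫⁻ ξ in annulus j, ENNReal.ofReal (F t ξ) ^ q) ^ (r / q)) ^ (1 / r)
      = (∫⁻ t in timeSet T,
          ((∫⁻ ξ in annulus j, ENNReal.ofReal (F t ξ) ^ q) ^ (1/q)) ^ r) ^ (1/r) := by
        congr 1
        refine lintegral_congr fun t => ?_
        rw [← ENNReal.rpow_mul, one_div_mul_eq_div]
    _ ≤ (∫⁻ t in timeSet T,
          (ENNReal.ofReal K * kk t * N0 + ENNReal.ofReal K * ∫⁻ τ, w t τ) ^ r) ^ (1/r) := by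
        apply ENNReal.rpow_le_rpow _ (by positivity)
        apply lintegral_mono_ae
        filter_upwards [hB, hwa] with t h1 h2
        rw [← h2]
        exact ENNReal.rpow_le_rpow h1 hr0.le
    _ ≤ (∫⁻ t in timeSet T, (ENNReal.ofReal K * kk t * N0) ^ r) ^ (1/r)
        + (∫⁻ t in timeSet T, (ENNReal.ofReal K * ∫⁻ τ, w t τ) ^ r) ^ (1/r) :=
        ENNReal.lintegral_Lp_add_le
          ((measurable_const.mul hkk).mul_const N0).aemeasurable
          (measurable_const.mul (Measurable.lintegral_prod_right hwm)).aemeasurable hr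
    _ ≤ (ENNReal.ofReal K * c2 * N0) + (ENNReal.ofReal K * c2 * ∫⁻ τ in timeSet T, NG τ) :=
        add_le_add hterm1 hterm2
    _ = (ENNReal.ofReal K * c2) * (N0 + ∫⁻ τ in timeSet T, NG τ) := by ring
    _ ≤ _ := mul_le_mul' hconst le_rfl
end
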